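/- arXiv:1709.00343 — 2 statements merged into one kernel-verified Lean document; each statement's English description precedes it below -/
import Mathlib

section
/- Let ψ be a harmonic function on an open ball B(x₀, r₀) ⊂ ℝ³ and let α ∈ L^∞((a,b)). Define u(t,x) = α(t)·∇ψ(x) on (a,b) × B(x₀,r₀). Then u is divergence-free and for every smooth compactly supported divergence-free vector field φ on (a,b) × B(x₀,r₀), ∬ u·(∂_t φ + Δφ) + u·(u·∇φ) dt dx = 0; i.e., u is a local weak solution of the Navier–Stokes equations with zero force. -/
open MeasureTheory Metric Filter Set

noncomputable section

/-- Physical space `ℝ³`. -/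
abbrev E3 : Type := Fin 3 → ℝ

/-- Spatial partial derivative of a scalar function. -/
noncomputable def pd (i : Fin 3) (f : E3 → ℝ) (x : E3) : ℝ :=
  fderiv ℝ f x (Pi.single i 1)

/-- Divergence of a vector field on `ℝ³`. -/
noncomputable def divg (f : E3 → E3) (x : E3) : ℝ := ∑ i, pd i (fun y => f y i) x

/-- Laplacian of a scalar function on `ℝ³`. -/
noncomputable def lap (f : E3 → ℝ) (x : E3) : ℝ := ∑ i, pd i (pd i f) x

/-- Curl of a vector field on `ℝ³`. -/
noncomputable def curl3 (f : E3 → E3) (x : E3) : E3 :=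
  ![pd 1 (fun y => f y 2) x - pd 2 (fun y => f y 1) x,
    pd 2 (fun y => f y 0) x - pd 0 (fun y => f y 2) x,
    pd 0 (fun y => f y 1) x - pd 1 (fun y => f y 0) x]

/-- Cross product on `ℝ³`. -/
noncomputable def cross (u v : E3) : E3 :=
  ![u 1 * v 2 - u 2 * v 1, u 2 * v 0 - u 0 * v 2, u 0 * v 1 - u 1 * v 0]

lemma pd_of_eventually_zero {f : E3 → ℝ} {x : E3} (h : f =ᶠ[nhds x] 0) (i : Fin 3) :
    pd i f x = 0 := by
  unfold pd
  rw [Filter.EventuallyEq.fderiv_eq h]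
  show (fderiv ℝ (fun _ => (0:ℝ)) x) (Pi.single i 1) = 0
  rw [fderiv_fun_const]
  simp

def ins (i : Fin 3) (t : ℝ) (w : Fin 2 → ℝ) : E3 := Fin.insertNth i t w

lemma ins_eq_affine (i : Fin 3) (w : Fin 2 → ℝ) : (fun t : ℝ => ins i t w)
      = (fun t : ℝ => ins i 0 w + t • (Pi.single i 1 : E3)) := by
    funext t
    refine funext (Fin.succAboveCases i ?_ ?_)
    · simp [ins, Fin.insertNth_apply_same]
    · intro j
      simp [ins, Fin.insertNth_apply_succAbove, Pi.single_eq_of_ne (Fin.succAbove_ne i j)]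

lemma continuous_ins (i : Fin 3) (w : Fin 2 → ℝ) : Continuous (fun t : ℝ => ins i t w) := by
  rw [ins_eq_affine]
  exact continuous_const.add (continuous_id.smul continuous_const)

lemma hasDerivAt_ins (i : Fin 3) (w : Fin 2 → ℝ) (s : ℝ) :
    HasDerivAt (fun t : ℝ => ins i t w) (Pi.single i 1) s := by
  rw [ins_eq_affine]
  simpa using (((hasDerivAt_id s).smul_const (Pi.single i 1 : E3)).const_add (ins i 0 w))


lemma integral_pd_eq_zero {h : E3 → ℝ} (hh : ContDiff ℝ 1 h)
    (hsupp : HasCompactSupport h) (i : Fin 3) : ∫ x : E3, pd i h x = 0 := by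
  classical
  have hFcont : Continuous (fun x => pd i h x) :=
    (hh.continuous_fderiv one_ne_zero).clm_apply continuous_const
  have hpdzero : ∀ x, x ∉ tsupport h → pd i h x = 0 := by
    intro x hx
    exact pd_of_eventually_zero (notMem_tsupport_iff_eventuallyEq.mp hx) i
  have hFsupp : HasCompactSupport (fun x => pd i h x) :=
    HasCompactSupport.intro hsupp hpdzero
  have hFint : Integrable (fun x => pd i h x) := hFcont.integrable_of_hasCompactSupport hFsupp
  set e := MeasurableEquiv.piFinSuccAbove (fun _ : Fin 3 => ℝ) i with he
  have mp : MeasurePreserving e := volume_preserving_piFinSuccAbove (fun _ : Fin 3 => ℝ) i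
  have mps : MeasurePreserving e.symm := mp.symm e
  have hcomp : ∫ y : ℝ × (Fin 2 → ℝ), pd i h (e.symm y) = ∫ x : E3, pd i h x :=
    mps.integral_comp e.symm.measurableEmbedding _
  rw [← hcomp]
  have hintc : Integrable (fun y : ℝ × (Fin 2 → ℝ) => pd i h (e.symm y)) :=
    (mps.integrable_comp_emb e.symm.measurableEmbedding).mpr hFint
  rw [show (volume : Measure (ℝ × (Fin 2 → ℝ))) = volume.prod volume from rfl] at hintc ⊢
  rw [integral_prod_symm _ hintc]
  have hesymm : ∀ (t : ℝ) (w : Fin 2 → ℝ), e.symm (t, w) = ins i t w := fun t w => rfl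
  obtain ⟨R, hR⟩ := hsupp.isBounded.subset_closedBall 0
  have key : ∀ w : Fin 2 → ℝ, ∫ t : ℝ, pd i h (e.symm (t, w)) = 0 := by
    intro w
    simp only [hesymm]
    have hc : ∀ s : ℝ, HasDerivAt (fun t => h (ins i t w)) (pd i h (ins i s w)) s := fun s =>
      ((hh.differentiable one_ne_zero _).hasFDerivAt).comp_hasDerivAt s (hasDerivAt_ins i w s)
    have hsub : ∀ (f : E3 → ℝ), (∀ x, x ∉ tsupport h → f x = 0) →
        HasCompactSupport (fun t => f (ins i t w)) := by
      intro f hf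
      apply HasCompactSupport.intro (isCompact_Icc (a := -R) (b := R))
      intro t ht
      apply hf
      intro hmem
      have h1 : ‖ins i t w‖ ≤ R := mem_closedBall_zero_iff.mp (hR hmem)
      have h2 : |t| ≤ R := by
        have h3 := norm_le_pi_norm (ins i t w) i
        rw [show (ins i t w) i = t by simp [ins]] at h3
        exact le_trans h3 h1
      simp only [mem_Icc, not_and_or, not_le] at ht
      rcases ht with ht | ht
      · exact absurd (neg_le_of_abs_le h2) (not_le.mpr ht)
      · exact absurd (le_of_abs_le h2) (not_le.mpr ht)
    have hint1 : Integrable (fun t => h (ins i t w)) :=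
      (hh.continuous.comp (continuous_ins i w)).integrable_of_hasCompactSupport
        (hsub h fun x hx => image_eq_zero_of_notMem_tsupport hx)
    have hint2 : Integrable (fun t => pd i h (ins i t w)) :=
      (hFcont.comp (continuous_ins i w)).integrable_of_hasCompactSupport (hsub _ hpdzero)
    exact integral_eq_zero_of_hasDerivAt_of_integrable hc hint2 hint1
  simp only [key, integral_zero]

section IBP

variable {U : Set E3} {g h : E3 → ℝ}

lemma integrable_mul_of (hU : IsOpen U) (hm : AEStronglyMeasurable g (volume : Measure E3))
    (hgc : ContinuousOn g U) (hhc : Continuous h) (hcs : HasCompactSupport h)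
    (hts : tsupport h ⊆ U) : Integrable (fun x => g x * h x) := by
  rcases (tsupport h).eq_empty_or_nonempty with he | hne
  · have hz : ∀ x, h x = 0 := fun x => image_eq_zero_of_notMem_tsupport (by simp [he])
    have : (fun x => g x * h x) = fun _ => 0 := by funext x; simp [hz x]
    rw [this]
    exact integrable_zero _ _ _
  obtain ⟨C1, hC1⟩ := hcs.exists_bound_of_continuousOn (hgc.mono hts)
  obtain ⟨C2, hC2⟩ := hcs.exists_bound_of_continuousOn hhc.continuousOn
  refine Integrable.mono' (g := (tsupport h).indicator fun _ => C1 * C2)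
    ?_ (hm.mul hhc.aestronglyMeasurable) ?_
  · rw [integrable_indicator_iff hcs.isClosed.measurableSet]
    exact integrableOn_const hcs.measure_lt_top.ne
  · filter_upwards with x
    by_cases hx : x ∈ tsupport h
    · rw [Set.indicator_of_mem hx]
      calc ‖g x * h x‖ = ‖g x‖ * ‖h x‖ := norm_mul _ _
        _ ≤ C1 * C2 := mul_le_mul (hC1 x hx) (hC2 x hx) (norm_nonneg _)
            (le_trans (norm_nonneg _) (hC1 x hx))
    · rw [Set.indicator_of_notMem hx, image_eq_zero_of_notMem_tsupport hx, mul_zero]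
      simp

lemma glue_contDiff (hU : IsOpen U) (hg : ContDiffOn ℝ 1 g U) (hh : ContDiff ℝ 1 h)
    (hts : tsupport h ⊆ U) : ContDiff ℝ 1 (fun x => g x * h x) := by
  rw [contDiff_iff_contDiffAt]
  intro x
  by_cases hx : x ∈ U
  · exact ((hg x hx).contDiffAt (hU.mem_nhds hx)).mul hh.contDiffAt
  · have hx' : x ∉ tsupport h := fun hc => hx (hts hc)
    have hzero : (fun y => g y * h y) =ᶠ[nhds x] 0 := by
      filter_upwards [notMem_tsupport_iff_eventuallyEq.mp hx'] with y hy
      simp [hy]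
    exact contDiffAt_const.congr_of_eventuallyEq hzero

lemma glue_pd (hU : IsOpen U) (hg : ContDiffOn ℝ 1 g U) (hh : ContDiff ℝ 1 h)
    (hts : tsupport h ⊆ U) (j : Fin 3) (x : E3) :
    pd j (fun y => g y * h y) x = pd j g x * h x + g x * pd j h x := by
  by_cases hx : x ∈ U
  · have dg : DifferentiableAt ℝ g x :=
      (((hg x hx).contDiffAt (hU.mem_nhds hx)).differentiableAt one_ne_zero)
    have dh : DifferentiableAt ℝ h x := hh.differentiable one_ne_zero x
    unfold pd
    rw [fderiv_fun_mul dg dh]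
    simp only [ContinuousLinearMap.add_apply, ContinuousLinearMap.smul_apply, smul_eq_mul]
    ring
  · have hx' : x ∉ tsupport h := fun hc => hx (hts hc)
    have hev := notMem_tsupport_iff_eventuallyEq.mp hx'
    have hzero : (fun y => g y * h y) =ᶠ[nhds x] 0 := by
      filter_upwards [hev] with y hy; simp [hy]
    rw [pd_of_eventually_zero hzero, pd_of_eventually_zero hev,
      image_eq_zero_of_notMem_tsupport hx']
    ring

lemma pd_mul_integrable (hU : IsOpen U) (hg : ContDiffOn ℝ 1 g U) (hhc : Continuous h)
    (hcs : HasCompactSupport h) (hts : tsupport h ⊆ U) (j : Fin 3) :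
    Integrable (fun x => pd j g x * h x) := by
  refine integrable_mul_of hU ((measurable_fderiv_apply_const ℝ g _).aestronglyMeasurable)
    ?_ hhc hcs hts
  exact ((hg.continuousOn_fderiv_of_isOpen hU le_rfl).clm_apply continuousOn_const)

lemma hcs_pd (hh : ContDiff ℝ 1 h) (hcs : HasCompactSupport h) (j : Fin 3) :
    HasCompactSupport (pd j h) ∧ Continuous (pd j h) ∧ tsupport (pd j h) ⊆ tsupport h := by
  have hsub : ∀ x, x ∉ tsupport h → pd j h x = 0 := fun x hx =>
    pd_of_eventually_zero (notMem_tsupport_iff_eventuallyEq.mp hx) j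
  refine ⟨HasCompactSupport.intro hcs hsub, (hh.continuous_fderiv one_ne_zero).clm_apply
    continuous_const, ?_⟩
  apply closure_minimal ?_ hcs.isClosed
  intro x hx
  by_contra hc
  exact hx (hsub x hc)

lemma ibp (hU : IsOpen U) (hg : ContDiffOn ℝ 1 g U) (hh : ContDiff ℝ 1 h)
    (hcs : HasCompactSupport h) (hts : tsupport h ⊆ U) (j : Fin 3) :
    Integrable (fun x => g x * pd j h x) ∧
    (∫ x, g x * pd j h x) = -∫ x, pd j g x * h x := by
  set w := fun x => g x * h x with hw
  have hwc : ContDiff ℝ 1 w := glue_contDiff hU hg hh hts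
  have hwcs : HasCompactSupport w := by
    apply HasCompactSupport.intro hcs
    intro x hx
    simp [hw, image_eq_zero_of_notMem_tsupport hx]
  have hpdw := hcs_pd hwc hwcs j
  have hintw : Integrable (pd j w) :=
    hpdw.2.1.integrable_of_hasCompactSupport hpdw.1
  have hinta : Integrable (fun x => pd j g x * h x) := pd_mul_integrable hU hg hh.continuous hcs hts j
  have heq : (fun x => g x * pd j h x) = fun x => pd j w x - pd j g x * h x := by
    funext x
    rw [glue_pd hU hg hh hts j x]
    ring
  have hintb : Integrable (fun x => g x * pd j h x) := by
    rw [heq]; exact hintw.sub hinta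
  refine ⟨hintb, ?_⟩
  have hzero : (∫ x, pd j w x) = 0 := integral_pd_eq_zero hwc hwcs j
  have hsplit : (∫ x, pd j w x) = (∫ x, pd j g x * h x) + ∫ x, g x * pd j h x := by
    rw [← integral_add hinta hintb]
    congr 1
    funext x
    rw [glue_pd hU hg hh hts j x]
  rw [hsplit] at hzero
  linarith

end IBP

section Schwarz

lemma fderiv_fderiv_apply {E : Type*} [NormedAddCommGroup E] [NormedSpace ℝ E] {f : E → ℝ}
    {x : E} (hf : DifferentiableAt ℝ (fderiv ℝ f) x) (v w : E) :
    fderiv ℝ (fun y => fderiv ℝ f y v) x w = fderiv ℝ (fderiv ℝ f) x w v := by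
  rw [fderiv_clm_apply hf (differentiableAt_const v)]
  simp

lemma pd_comm {U : Set E3} {f : E3 → ℝ} {x : E3} (hU : IsOpen U) (hf : ContDiffOn ℝ (⊤ : ℕ∞) f U)
    (hx : x ∈ U) (i j : Fin 3) : pd i (pd j f) x = pd j (pd i f) x := by
  have hat : ContDiffAt ℝ (⊤ : ℕ∞) f x := (hf x hx).contDiffAt (hU.mem_nhds hx)
  have hdf : DifferentiableAt ℝ (fderiv ℝ f) x :=
    (hat.fderiv_right (m := 1) (WithTop.coe_le_coe.mpr le_top)).differentiableAt one_ne_zero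
  have hsymm := hat.isSymmSndFDerivAt (by simp [minSmoothness_of_isRCLikeNormedField]; exact WithTop.coe_le_coe.mpr le_top)
  unfold pd
  rw [fderiv_fderiv_apply hdf, fderiv_fderiv_apply hdf]
  exact hsymm _ _

/-- second derivative symmetry on all of `ℝ × E3` for smooth functions. -/
lemma fderiv2_comm {Φ : ℝ × E3 → ℝ} (hΦ : ContDiff ℝ (⊤ : ℕ∞) Φ) (p : ℝ × E3) (v w : ℝ × E3) :
    fderiv ℝ (fun q => fderiv ℝ Φ q v) p w = fderiv ℝ (fun q => fderiv ℝ Φ q w) p v := by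
  have hdf : DifferentiableAt ℝ (fderiv ℝ Φ) p :=
    ((hΦ.contDiffAt).fderiv_right (m := 1) (WithTop.coe_le_coe.mpr le_top)).differentiableAt one_ne_zero
  have hsymm := (hΦ.contDiffAt (x := p)).isSymmSndFDerivAt (by simp [minSmoothness_of_isRCLikeNormedField]; exact WithTop.coe_le_coe.mpr le_top)
  rw [fderiv_fderiv_apply hdf, fderiv_fderiv_apply hdf]
  exact hsymm _ _

end Schwarz

section Conversion

lemma fderiv_slice_right {Φ : ℝ × E3 → ℝ} {t : ℝ} {x : E3}
    (hΦ : DifferentiableAt ℝ Φ (t, x)) (v : E3) :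
    fderiv ℝ (fun y => Φ (t, y)) x v = fderiv ℝ Φ (t, x) (0, v) := by
  have h1 : HasFDerivAt (fun y : E3 => (t, y)) (ContinuousLinearMap.inr ℝ ℝ E3) x :=
    hasFDerivAt_prodMk_right t x
  have h2 := (hΦ.hasFDerivAt.comp x h1).fderiv
  rw [show (fun y => Φ (t, y)) = Φ ∘ (fun y : E3 => (t, y)) from rfl, h2]
  simp

lemma deriv_slice_left {Φ : ℝ × E3 → ℝ} {t : ℝ} {x : E3}
    (hΦ : DifferentiableAt ℝ Φ (t, x)) :
    deriv (fun s => Φ (s, x)) t = fderiv ℝ Φ (t, x) (1, 0) := by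
  have h1 : HasDerivAt (fun s : ℝ => (s, x)) ((1 : ℝ), (0 : E3)) t :=
    (hasDerivAt_id t).prodMk (hasDerivAt_const t x)
  exact (hΦ.hasFDerivAt.comp_hasDerivAt t h1).deriv

end Conversion

section Slice

variable {φ : ℝ × E3 → E3} (hφ : ContDiff ℝ (⊤ : ℕ∞) φ)

def eE (j : Fin 3) : E3 := Pi.single j 1

include hφ in
lemma contDiff_coord (i : Fin 3) : ContDiff ℝ (⊤ : ℕ∞) (fun p : ℝ × E3 => φ p i) :=
  contDiff_pi.mp hφ i

include hφ in
lemma contDiff_fderiv_coord (i : Fin 3) (v : ℝ × E3) :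
    ContDiff ℝ (⊤ : ℕ∞) (fun p : ℝ × E3 => fderiv ℝ (fun q : ℝ × E3 => φ q i) p v) := by
  exact ((contDiff_coord hφ i).fderiv_right (by simp)).clm_apply contDiff_const

include hφ in
lemma pd_slice (i j : Fin 3) (t : ℝ) (x : E3) :
    pd j (fun y => φ (t, y) i) x = fderiv ℝ (fun p : ℝ × E3 => φ p i) (t, x) (0, eE j) :=
  fderiv_slice_right (((contDiff_coord hφ i).differentiable (by simp)) (t, x)) _

include hφ in
lemma deriv_slice (i : Fin 3) (t : ℝ) (x : E3) :
    deriv (fun s => φ (s, x) i) t = fderiv ℝ (fun p : ℝ × E3 => φ p i) (t, x) (1, 0) :=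
  deriv_slice_left (((contDiff_coord hφ i).differentiable (by simp)) (t, x))

include hφ in
lemma pd_pd_slice (i j k : Fin 3) (t : ℝ) (x : E3) :
    pd k (pd j (fun y => φ (t, y) i)) x =
      fderiv ℝ (fun p : ℝ × E3 => fderiv ℝ (fun q : ℝ × E3 => φ q i) p (0, eE j)) (t, x)
        (0, eE k) := by
  have h1 : pd j (fun y => φ (t, y) i) =
      fun y => fderiv ℝ (fun p : ℝ × E3 => φ p i) (t, y) (0, eE j) := by
    funext y; exact pd_slice hφ i j t y
  rw [h1]
  exact fderiv_slice_right (((contDiff_fderiv_coord hφ i _).differentiable (by simp)) (t, x)) _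

include hφ in
lemma lap_slice (i : Fin 3) (t : ℝ) (x : E3) :
    lap (fun y => φ (t, y) i) x =
      ∑ j, fderiv ℝ (fun p : ℝ × E3 => fderiv ℝ (fun q : ℝ × E3 => φ q i) p (0, eE j)) (t, x)
        (0, eE j) := by
  unfold lap
  exact Finset.sum_congr rfl fun j _ => pd_pd_slice hφ i j j t x

include hφ in
lemma cont_Dphi (i : Fin 3) :
    Continuous (fun p : ℝ × E3 => deriv (fun s => φ (s, p.2) i) p.1) := by
  have h1 : (fun p : ℝ × E3 => deriv (fun s => φ (s, p.2) i) p.1)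
      = fun p : ℝ × E3 => fderiv ℝ (fun q : ℝ × E3 => φ q i) p (1, 0) := by
    funext p
    rw [show p = (p.1, p.2) from rfl]
    exact deriv_slice hφ i p.1 p.2
  rw [h1]
  exact ((contDiff_coord hφ i).continuous_fderiv (by simp)).clm_apply continuous_const

include hφ in
lemma cont_pd_slice (i j : Fin 3) :
    Continuous (fun p : ℝ × E3 => pd j (fun y => φ (p.1, y) i) p.2) := by
  have h1 : (fun p : ℝ × E3 => pd j (fun y => φ (p.1, y) i) p.2)
      = fun p : ℝ × E3 => fderiv ℝ (fun q : ℝ × E3 => φ q i) p (0, eE j) := by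
    funext p
    exact pd_slice hφ i j p.1 p.2
  rw [h1]
  exact ((contDiff_coord hφ i).continuous_fderiv (by simp)).clm_apply continuous_const

include hφ in
lemma cont_lap_slice (i : Fin 3) :
    Continuous (fun p : ℝ × E3 => lap (fun y => φ (p.1, y) i) p.2) := by
  have h1 : (fun p : ℝ × E3 => lap (fun y => φ (p.1, y) i) p.2)
      = fun p : ℝ × E3 => ∑ j, fderiv ℝ
          (fun q : ℝ × E3 => fderiv ℝ (fun q' : ℝ × E3 => φ q' i) q (0, eE j)) p (0, eE j) := by
    funext p
    exact lap_slice hφ i p.1 p.2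
  rw [h1]
  exact continuous_finset_sum _ fun j _ =>
    ((contDiff_fderiv_coord hφ i _).continuous_fderiv (by simp)).clm_apply continuous_const

include hφ in
lemma div_deriv_time_zero (hdiv : ∀ (t : ℝ) (x : E3), divg (fun y => φ (t, y)) x = 0)
    (t : ℝ) (x : E3) :
    ∑ i, pd i (fun y => deriv (fun s => φ (s, y) i) t) x = 0 := by
  have key : ∀ i, pd i (fun y => deriv (fun s => φ (s, y) i) t) x
      = deriv (fun s => fderiv ℝ (fun q : ℝ × E3 => φ q i) (s, x) (0, eE i)) t := by
    intro i
    have h1 : (fun y => deriv (fun s => φ (s, y) i) t)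
        = fun y => fderiv ℝ (fun q : ℝ × E3 => φ q i) (t, y) (1, 0) := by
      funext y; exact deriv_slice hφ i t y
    rw [h1]
    rw [show pd i (fun y => fderiv ℝ (fun q : ℝ × E3 => φ q i) (t, y) (1, 0)) x
        = fderiv ℝ (fun p : ℝ × E3 => fderiv ℝ (fun q : ℝ × E3 => φ q i) p (1, 0)) (t, x)
          (0, eE i) from
      fderiv_slice_right (((contDiff_fderiv_coord hφ i _).differentiable (by simp)) (t, x)) _]
    rw [fderiv2_comm (contDiff_coord hφ i) (t, x) (1, 0) (0, eE i)]
    exact (deriv_slice_left (((contDiff_fderiv_coord hφ i _).differentiable (by simp)) (t, x))).symm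
  simp only [key]
  have hdiff : ∀ i : Fin 3, DifferentiableAt ℝ
      (fun s => fderiv ℝ (fun q : ℝ × E3 => φ q i) (s, x) (0, eE i)) t := by
    intro i
    exact (((contDiff_fderiv_coord hφ i _).differentiable (by simp)).comp
      ((differentiable_id).prodMk (differentiable_const x))).differentiableAt
  rw [← deriv_fun_sum (fun i _ => hdiff i)]
  have h0 : (fun s => ∑ i, fderiv ℝ (fun q : ℝ × E3 => φ q i) (s, x) (0, eE i))
      = fun _ => (0 : ℝ) := by
    funext s
    have h2 : ∑ i, fderiv ℝ (fun q : ℝ × E3 => φ q i) (s, x) (0, eE i)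
        = divg (fun y => φ (s, y)) x := by
      unfold divg
      exact Finset.sum_congr rfl fun i _ => (pd_slice hφ i i s x).symm
    rw [h2, hdiv s x]
  rw [h0, deriv_const]

end Slice

section PdAlgebra

lemma pd_mul {f g : E3 → ℝ} {x : E3} (hf : DifferentiableAt ℝ f x)
    (hg : DifferentiableAt ℝ g x) (j : Fin 3) :
    pd j (fun y => f y * g y) x = pd j f x * g x + f x * pd j g x := by
  unfold pd
  rw [fderiv_fun_mul hf hg]
  simp only [ContinuousLinearMap.add_apply, ContinuousLinearMap.smul_apply, smul_eq_mul]
  ring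

lemma pd_const_mul {f : E3 → ℝ} {x : E3} (hf : DifferentiableAt ℝ f x) (c : ℝ) (j : Fin 3) :
    pd j (fun y => c * f y) x = c * pd j f x := by
  unfold pd
  rw [fderiv_const_mul hf]
  simp

lemma pd_sum {f : Fin 3 → E3 → ℝ} {x : E3} (hf : ∀ j, DifferentiableAt ℝ (f j) x) (i : Fin 3) :
    pd i (fun y => ∑ j, f j y) x = ∑ j, pd i (f j) x := by
  unfold pd
  rw [fderiv_fun_sum (fun j _ => hf j)]
  simp

end PdAlgebra

section Vanish

variable {φ : ℝ × E3 → E3}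

lemma ev_zero_coord {p : ℝ × E3} (hp : p ∉ tsupport φ) (i : Fin 3) :
    (fun q : ℝ × E3 => φ q i) =ᶠ[nhds p] 0 := by
  filter_upwards [notMem_tsupport_iff_eventuallyEq.mp hp] with q hq
  show φ q i = 0
  rw [show φ q = 0 from hq]
  rfl

lemma slice_ev_zero_right {t : ℝ} {x : E3} (hp : (t, x) ∉ tsupport φ) (i : Fin 3) :
    (fun y => φ (t, y) i) =ᶠ[nhds x] 0 :=
  (ev_zero_coord hp i).comp_tendsto ((Continuous.prodMk_right t).tendsto x)

lemma slice_ev_zero_left {t : ℝ} {x : E3} (hp : (t, x) ∉ tsupport φ) (i : Fin 3) :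
    (fun s => φ (s, x) i) =ᶠ[nhds t] 0 :=
  (ev_zero_coord hp i).comp_tendsto ((continuous_id.prodMk continuous_const).tendsto t)

lemma deriv_zero_of_nmem {t : ℝ} {x : E3} (hp : (t, x) ∉ tsupport φ) (i : Fin 3) :
    deriv (fun s => φ (s, x) i) t = 0 := by
  rw [Filter.EventuallyEq.deriv_eq (slice_ev_zero_left hp i)]
  exact deriv_const t 0

lemma pd_slice_zero_of_nmem {t : ℝ} {x : E3} (hp : (t, x) ∉ tsupport φ) (i j : Fin 3) :
    pd j (fun y => φ (t, y) i) x = 0 :=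
  pd_of_eventually_zero (slice_ev_zero_right hp i) j

lemma pd_pd_slice_zero_of_nmem {t : ℝ} {x : E3} (hp : (t, x) ∉ tsupport φ) (i j k : Fin 3) :
    pd k (pd j (fun y => φ (t, y) i)) x = 0 := by
  apply pd_of_eventually_zero
  have hev : ∀ᶠ y in nhds x, (t, y) ∉ tsupport φ :=
    ((Continuous.prodMk_right t).tendsto x).eventually
      ((isClosed_tsupport φ).isOpen_compl.eventually_mem hp)
  filter_upwards [hev] with y hy
  exact pd_slice_zero_of_nmem hy i j

lemma lap_slice_zero_of_nmem {t : ℝ} {x : E3} (hp : (t, x) ∉ tsupport φ) (i : Fin 3) :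
    lap (fun y => φ (t, y) i) x = 0 := by
  unfold lap
  refine Finset.sum_eq_zero fun j _ => pd_pd_slice_zero_of_nmem hp i j j

lemma coord_zero_of_nmem {t : ℝ} {x : E3} (hp : (t, x) ∉ tsupport φ) (i : Fin 3) :
    φ (t, x) i = 0 := by
  rw [show φ (t, x) = 0 from image_eq_zero_of_notMem_tsupport hp]
  rfl

end Vanish

lemma support_package {S : Set E3} (hSc : IsCompact S) {f : E3 → ℝ}
    (hz : ∀ x, x ∉ S → f x = 0) : HasCompactSupport f ∧ tsupport f ⊆ S := by
  have h1 : tsupport f ⊆ S := by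
    apply closure_minimal ?_ hSc.isClosed
    intro x hx
    by_contra hc
    exact hx (hz x hc)
  exact ⟨IsCompact.of_isClosed_subset hSc isClosed_closure h1, h1⟩

section PsiIdent

variable {U : Set E3} {ψ : E3 → ℝ} {x : E3}

lemma pdpsi_smooth (hU : IsOpen U) (hψ : ContDiffOn ℝ (⊤ : ℕ∞) ψ U) (i : Fin 3) :
    ContDiffOn ℝ (⊤ : ℕ∞) (pd i ψ) U :=
  (hψ.fderiv_of_isOpen hU (by simp)).clm_apply contDiffOn_const

lemma third_deriv_sum_zero (hU : IsOpen U) (hψ : ContDiffOn ℝ (⊤ : ℕ∞) ψ U)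
    (hharm : ∀ y ∈ U, lap ψ y = 0) (hx : x ∈ U) (i : Fin 3) :
    ∑ j, pd j (pd j (pd i ψ)) x = 0 := by
  have hpdψ : ∀ j, ContDiffOn ℝ (⊤ : ℕ∞) (pd j ψ) U := pdpsi_smooth hU hψ
  have hpd2ψ : ∀ j k, ContDiffOn ℝ (⊤ : ℕ∞) (pd k (pd j ψ)) U := fun j k =>
    pdpsi_smooth hU (hpdψ j) k
  have e1 : ∀ j, pd j (pd j (pd i ψ)) x = pd j (pd i (pd j ψ)) x := by
    intro j
    have hev : pd j (pd i ψ) =ᶠ[nhds x] pd i (pd j ψ) := by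
      filter_upwards [hU.mem_nhds hx] with y hy using pd_comm hU hψ hy j i
    show (fderiv ℝ (pd j (pd i ψ)) x) (Pi.single j 1)
        = (fderiv ℝ (pd i (pd j ψ)) x) (Pi.single j 1)
    rw [Filter.EventuallyEq.fderiv_eq hev]
  have e2 : ∀ j, pd j (pd i (pd j ψ)) x = pd i (pd j (pd j ψ)) x := fun j =>
    pd_comm hU (hpdψ j) hx j i
  have e3 : ∑ j, pd i (pd j (pd j ψ)) x = pd i (fun y => ∑ j, pd j (pd j ψ) y) x := by
    refine (pd_sum (fun j => ?_) i).symm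
    exact ((hpd2ψ j j).contDiffAt (hU.mem_nhds hx)).differentiableAt (by simp)
  have e4 : pd i (fun y => ∑ j, pd j (pd j ψ) y) x = 0 := by
    apply pd_of_eventually_zero
    filter_upwards [hU.mem_nhds hx] with y hy
    exact hharm y hy
  calc ∑ j, pd j (pd j (pd i ψ)) x = ∑ j, pd i (pd j (pd j ψ)) x :=
        Finset.sum_congr rfl fun j _ => (e1 j).trans (e2 j)
    _ = pd i (fun y => ∑ j, pd j (pd j ψ) y) x := e3
    _ = 0 := e4

lemma grad_identity (hU : IsOpen U) (hψ : ContDiffOn ℝ (⊤ : ℕ∞) ψ U)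
    (hharm : ∀ y ∈ U, lap ψ y = 0) (hx : x ∈ U) (i : Fin 3) :
    ∑ j, pd j (fun y => pd i ψ y * pd j ψ y) x
      = pd i (fun y => (1/2) * ∑ j, pd j ψ y * pd j ψ y) x := by
  have hpdψ : ∀ j, ContDiffOn ℝ (⊤ : ℕ∞) (pd j ψ) U := pdpsi_smooth hU hψ
  have dj : ∀ j, DifferentiableAt ℝ (pd j ψ) x := fun j =>
    ((hpdψ j).contDiffAt (hU.mem_nhds hx)).differentiableAt (by simp)
  have hL : ∑ j, pd j (fun y => pd i ψ y * pd j ψ y) x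
      = ∑ j, (pd j (pd i ψ) x * pd j ψ x) + pd i ψ x * ∑ j, pd j (pd j ψ) x := by
    rw [Finset.mul_sum, ← Finset.sum_add_distrib]
    exact Finset.sum_congr rfl fun j _ => pd_mul (dj i) (dj j) j
  have hharm0 : ∑ j, pd j (pd j ψ) x = 0 := hharm x hx
  have hsum_diff : DifferentiableAt ℝ (fun y => ∑ j, pd j ψ y * pd j ψ y) x := by
    apply DifferentiableAt.fun_sum
    exact fun j _ => (dj j).mul (dj j)
  have hR : pd i (fun y => (1/2) * ∑ j, pd j ψ y * pd j ψ y) x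
      = ∑ j, pd i (pd j ψ) x * pd j ψ x := by
    rw [pd_const_mul hsum_diff, pd_sum (f := fun j y => pd j ψ y * pd j ψ y) (fun j => (dj j).mul (dj j)) i]
    rw [Finset.mul_sum]
    refine Finset.sum_congr rfl fun j _ => ?_
    rw [pd_mul (dj j) (dj j) i]
    ring
  rw [hL, hharm0, mul_zero, add_zero, hR]
  exact Finset.sum_congr rfl fun j _ => by rw [pd_comm hU hψ hx j i]

end PsiIdent

section FixedTime

variable {a b r₀ : ℝ} {x₀ : E3} {ψ : E3 → ℝ} {φ : ℝ × E3 → E3} {t : ℝ}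

/-- All the basic facts about the time-`t` slice of `φ`. -/
lemma slice_facts (hφ : ContDiff ℝ (⊤ : ℕ∞) φ) (hφK : HasCompactSupport φ)
    (hK : tsupport φ ⊆ Ioo a b ×ˢ ball x₀ r₀) (t : ℝ) :
    IsCompact ((fun x : E3 => (t, x)) ⁻¹' tsupport φ) ∧
    ((fun x : E3 => (t, x)) ⁻¹' tsupport φ) ⊆ ball x₀ r₀ := by
  constructor
  · refine IsCompact.of_isClosed_subset (hφK.image continuous_snd)
      ((isClosed_tsupport φ).preimage ((continuous_const.prodMk continuous_id))) ?_
    intro x hx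
    exact ⟨(t, x), hx, rfl⟩
  · intro x hx
    exact (hK hx).2

lemma inner_A_zero (hψ : ContDiffOn ℝ (⊤ : ℕ∞) ψ (ball x₀ r₀))
    (hharm : ∀ y ∈ ball x₀ r₀, lap ψ y = 0)
    (hφ : ContDiff ℝ (⊤ : ℕ∞) φ) (hφK : HasCompactSupport φ)
    (hK : tsupport φ ⊆ Ioo a b ×ˢ ball x₀ r₀)
    (hdiv : ∀ (s : ℝ) (x : E3), divg (fun y => φ (s, y)) x = 0) (t : ℝ) :
    Integrable (fun x : E3 => ∑ i, pd i ψ x *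
        (deriv (fun s => φ (s, x) i) t + lap (fun y => φ (t, y) i) x)) ∧
    (∫ x : E3, ∑ i, pd i ψ x *
        (deriv (fun s => φ (s, x) i) t + lap (fun y => φ (t, y) i) x)) = 0 := by
  have hU : IsOpen (ball x₀ r₀) := isOpen_ball
  set U := ball x₀ r₀
  have hψ1 : ContDiffOn ℝ 1 ψ U := hψ.of_le (by simp)
  have hpdψ : ∀ i, ContDiffOn ℝ (⊤ : ℕ∞) (pd i ψ) U := pdpsi_smooth hU hψ
  have hpd2ψ : ∀ i j, ContDiffOn ℝ (⊤ : ℕ∞) (pd j (pd i ψ)) U := fun i j =>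
    pdpsi_smooth hU (hpdψ i) j
  obtain ⟨hKtc, hKtU⟩ := slice_facts hφ hφK hK t
  set Kt := (fun x : E3 => (t, x)) ⁻¹' tsupport φ with hKt
  -- the time-derivative slices
  have hD_eq : ∀ i, (fun x : E3 => deriv (fun s => φ (s, x) i) t)
      = fun x => fderiv ℝ (fun q : ℝ × E3 => φ q i) (t, x) (1, 0) := fun i =>
    funext fun x => deriv_slice hφ i t x
  have hD_cd : ∀ i, ContDiff ℝ (⊤ : ℕ∞) (fun x : E3 => deriv (fun s => φ (s, x) i) t) := by
    intro i
    rw [hD_eq i]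
    exact (contDiff_fderiv_coord hφ i (1, 0)).comp (contDiff_const.prodMk contDiff_id)
  have hD_pack : ∀ i, HasCompactSupport (fun x : E3 => deriv (fun s => φ (s, x) i) t) ∧
      tsupport (fun x : E3 => deriv (fun s => φ (s, x) i) t) ⊆ Kt := fun i =>
    support_package hKtc fun x hx => deriv_zero_of_nmem hx i
  -- the space-slice functions
  have hΦt_cd : ∀ i, ContDiff ℝ (⊤ : ℕ∞) (fun y => φ (t, y) i) := fun i =>
    (contDiff_coord hφ i).comp (contDiff_const.prodMk contDiff_id)
  have hΦt_pack : ∀ i, HasCompactSupport (fun y => φ (t, y) i) ∧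
      tsupport (fun y => φ (t, y) i) ⊆ Kt := fun i =>
    support_package hKtc fun x hx => coord_zero_of_nmem hx i
  have hpdΦt_cd : ∀ i j, ContDiff ℝ (⊤ : ℕ∞) (pd j (fun y => φ (t, y) i)) := fun i j =>
    ((hΦt_cd i).fderiv_right (by simp)).clm_apply contDiff_const
  have hpdΦt_pack : ∀ i j, HasCompactSupport (pd j (fun y => φ (t, y) i)) ∧
      tsupport (pd j (fun y => φ (t, y) i)) ⊆ Kt := fun i j =>
    support_package hKtc fun x hx => pd_slice_zero_of_nmem hx i j
  have hpdpdΦt_cont : ∀ i j, Continuous (pd j (pd j (fun y => φ (t, y) i))) := fun i j =>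
    ((hpdΦt_cd i j).continuous_fderiv (by simp)).clm_apply continuous_const
  have hpdpdΦt_pack : ∀ i j, HasCompactSupport (pd j (pd j (fun y => φ (t, y) i))) ∧
      tsupport (pd j (pd j (fun y => φ (t, y) i))) ⊆ Kt := fun i j =>
    support_package hKtc fun x hx => pd_pd_slice_zero_of_nmem hx i j j
  -- integrability of the summands
  have hIa1 : ∀ i, Integrable (fun x => pd i ψ x * deriv (fun s => φ (s, x) i) t) := fun i =>
    pd_mul_integrable hU hψ1 (hD_cd i).continuous (hD_pack i).1
      ((hD_pack i).2.trans hKtU) i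
  have hIa2 : ∀ i j, Integrable
      (fun x => pd i ψ x * pd j (pd j (fun y => φ (t, y) i)) x) := fun i j =>
    pd_mul_integrable hU hψ1 (hpdpdΦt_cont i j) (hpdpdΦt_pack i j).1
      ((hpdpdΦt_pack i j).2.trans hKtU) i
  have hIa2' : ∀ i, Integrable (fun x => pd i ψ x * lap (fun y => φ (t, y) i) x) := by
    intro i
    have : (fun x => pd i ψ x * lap (fun y => φ (t, y) i) x)
        = fun x => ∑ j, pd i ψ x * pd j (pd j (fun y => φ (t, y) i)) x := by
      funext x
      rw [show lap (fun y => φ (t, y) i) x = ∑ j, pd j (pd j (fun y => φ (t, y) i)) x from rfl,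
        Finset.mul_sum]
    rw [this]
    exact integrable_finset_sum _ fun j _ => hIa2 i j
  have hIa : ∀ i, Integrable (fun x => pd i ψ x *
      (deriv (fun s => φ (s, x) i) t + lap (fun y => φ (t, y) i) x)) := by
    intro i
    have : (fun x => pd i ψ x *
        (deriv (fun s => φ (s, x) i) t + lap (fun y => φ (t, y) i) x))
        = fun x => pd i ψ x * deriv (fun s => φ (s, x) i) t
            + pd i ψ x * lap (fun y => φ (t, y) i) x := by
      funext x; ring
    rw [this]
    exact (hIa1 i).add (hIa2' i)
  refine ⟨integrable_finset_sum _ fun i _ => hIa i, ?_⟩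
  rw [integral_finset_sum _ fun i _ => hIa i]
  -- split each summand
  have hsplit : ∀ i, (∫ x, pd i ψ x *
      (deriv (fun s => φ (s, x) i) t + lap (fun y => φ (t, y) i) x))
      = (∫ x, pd i ψ x * deriv (fun s => φ (s, x) i) t)
        + ∑ j, ∫ x, pd i ψ x * pd j (pd j (fun y => φ (t, y) i)) x := by
    intro i
    rw [← integral_finset_sum _ fun j _ => hIa2 i j, ← integral_add (hIa1 i) ?_]
    · congr 1
      funext x
      rw [show lap (fun y => φ (t, y) i) x = ∑ j, pd j (pd j (fun y => φ (t, y) i)) x from rfl]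
      rw [mul_add, Finset.mul_sum]
    · exact integrable_finset_sum _ fun j _ => hIa2 i j
  simp only [hsplit]
  rw [Finset.sum_add_distrib]
  -- Part 1 : time derivative part
  have hibpD : ∀ i, (∫ x, pd i ψ x * deriv (fun s => φ (s, x) i) t)
      = -(∫ x, ψ x * pd i (fun x' : E3 => deriv (fun s => φ (s, x') i) t) x) := by
    intro i
    have h := (ibp hU hψ1 ((hD_cd i).of_le (by simp)) (hD_pack i).1
      ((hD_pack i).2.trans hKtU) i).2
    linarith [h]
  have hIbD : ∀ i, Integrable
      (fun x => ψ x * pd i (fun x' : E3 => deriv (fun s => φ (s, x') i) t) x) := fun i =>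
    (ibp hU hψ1 ((hD_cd i).of_le (by simp)) (hD_pack i).1 ((hD_pack i).2.trans hKtU) i).1
  have hP1 : ∑ i, (∫ x, pd i ψ x * deriv (fun s => φ (s, x) i) t) = 0 := by
    simp only [hibpD]
    rw [Finset.sum_neg_distrib, ← integral_finset_sum _ fun i _ => hIbD i]
    have hz : ∀ x : E3,
        (∑ i, ψ x * pd i (fun x' : E3 => deriv (fun s => φ (s, x') i) t) x) = 0 := by
      intro x
      rw [← Finset.mul_sum, div_deriv_time_zero hφ hdiv t x, mul_zero]
    simp only [hz, integral_zero, neg_zero]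
  -- Part 2 : Laplacian part
  have hibpL : ∀ i j, (∫ x, pd i ψ x * pd j (pd j (fun y => φ (t, y) i)) x)
      = ∫ x, pd j (pd j (pd i ψ)) x * φ (t, x) i := by
    intro i j
    have step1 := (ibp hU ((hpdψ i).of_le (by simp)) ((hpdΦt_cd i j).of_le (by simp))
      (hpdΦt_pack i j).1 ((hpdΦt_pack i j).2.trans hKtU) j).2
    have step2 := (ibp hU ((hpd2ψ i j).of_le (by simp)) ((hΦt_cd i).of_le (by simp))
      (hΦt_pack i).1 ((hΦt_pack i).2.trans hKtU) j).2
    rw [step1, step2, neg_neg]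
  have hI3 : ∀ i j, Integrable (fun x => pd j (pd j (pd i ψ)) x * φ (t, x) i) := fun i j =>
    pd_mul_integrable hU ((hpd2ψ i j).of_le (by simp)) (hΦt_cd i).continuous
      (hΦt_pack i).1 ((hΦt_pack i).2.trans hKtU) j
  have hz3 : ∀ (i : Fin 3) (x : E3), (∑ j, pd j (pd j (pd i ψ)) x * φ (t, x) i) = 0 := by
    intro i x
    rw [← Finset.sum_mul]
    by_cases hx : x ∈ U
    · rw [third_deriv_sum_zero hU hψ hharm hx i, zero_mul]
    · rw [coord_zero_of_nmem (fun hc => hx (hKtU hc)) i, mul_zero]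
  have hP2 : ∑ i, ∑ j, (∫ x, pd i ψ x * pd j (pd j (fun y => φ (t, y) i)) x) = 0 := by
    simp only [hibpL]
    refine Finset.sum_eq_zero fun i _ => ?_
    rw [← integral_finset_sum _ fun j _ => hI3 i j]
    simp only [hz3, integral_zero]
  rw [hP1, hP2, add_zero]

end FixedTime

section FixedTimeB

variable {a b r₀ : ℝ} {x₀ : E3} {ψ : E3 → ℝ} {φ : ℝ × E3 → E3}

lemma inner_B_zero (hψ : ContDiffOn ℝ (⊤ : ℕ∞) ψ (ball x₀ r₀))
    (hharm : ∀ y ∈ ball x₀ r₀, lap ψ y = 0)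
    (hφ : ContDiff ℝ (⊤ : ℕ∞) φ) (hφK : HasCompactSupport φ)
    (hK : tsupport φ ⊆ Ioo a b ×ˢ ball x₀ r₀)
    (hdiv : ∀ (s : ℝ) (x : E3), divg (fun y => φ (s, y)) x = 0) (t : ℝ) :
    Integrable (fun x : E3 => ∑ i, ∑ j,
        pd i ψ x * (pd j ψ x * pd j (fun y => φ (t, y) i) x)) ∧
    (∫ x : E3, ∑ i, ∑ j, pd i ψ x * (pd j ψ x * pd j (fun y => φ (t, y) i) x)) = 0 := by
  have hU : IsOpen (ball x₀ r₀) := isOpen_ball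
  set U := ball x₀ r₀
  have hpdψ : ∀ i, ContDiffOn ℝ (⊤ : ℕ∞) (pd i ψ) U := pdpsi_smooth hU hψ
  obtain ⟨hKtc, hKtU⟩ := slice_facts hφ hφK hK t
  set Kt := (fun x : E3 => (t, x)) ⁻¹' tsupport φ with hKt
  have hΦt_cd : ∀ i, ContDiff ℝ (⊤ : ℕ∞) (fun y => φ (t, y) i) := fun i =>
    (contDiff_coord hφ i).comp (contDiff_const.prodMk contDiff_id)
  have hΦt_pack : ∀ i, HasCompactSupport (fun y => φ (t, y) i) ∧
      tsupport (fun y => φ (t, y) i) ⊆ Kt := fun i =>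
    support_package hKtc fun x hx => coord_zero_of_nmem hx i
  have hpdΦt_cont : ∀ i j, Continuous (pd j (fun y => φ (t, y) i)) := fun i j =>
    ((hΦt_cd i).continuous_fderiv (by simp)).clm_apply continuous_const
  have hpdΦt_pack : ∀ i j, HasCompactSupport (pd j (fun y => φ (t, y) i)) ∧
      tsupport (pd j (fun y => φ (t, y) i)) ⊆ Kt := fun i j =>
    support_package hKtc fun x hx => pd_slice_zero_of_nmem hx i j
  have hgij : ∀ i j, ContDiffOn ℝ (⊤ : ℕ∞) (fun y => pd i ψ y * pd j ψ y) U := fun i j =>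
    (hpdψ i).mul (hpdψ j)
  have hGG : ContDiffOn ℝ (⊤ : ℕ∞) (fun y => (1/2 : ℝ) * ∑ j, pd j ψ y * pd j ψ y) U :=
    contDiffOn_const.mul (ContDiffOn.sum fun j _ => (hpdψ j).mul (hpdψ j))
  -- integrability of the summands
  have hIb : ∀ i j, Integrable
      (fun x => pd i ψ x * (pd j ψ x * pd j (fun y => φ (t, y) i) x)) := by
    intro i j
    have heq : (fun x => pd i ψ x * (pd j ψ x * pd j (fun y => φ (t, y) i) x))
        = fun x => (pd i ψ x * pd j ψ x) * pd j (fun y => φ (t, y) i) x :=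
      funext fun x => by ring
    rw [heq]
    refine integrable_mul_of hU ?_ ((hpdψ i).continuousOn.mul (hpdψ j).continuousOn)
      (hpdΦt_cont i j) (hpdΦt_pack i j).1 ((hpdΦt_pack i j).2.trans hKtU)
    exact ((measurable_fderiv_apply_const ℝ ψ _).mul
      (measurable_fderiv_apply_const ℝ ψ _)).aestronglyMeasurable
  have hIpdg : ∀ i j, Integrable
      (fun x => pd j (fun y => pd i ψ y * pd j ψ y) x * φ (t, x) i) := fun i j =>
    pd_mul_integrable hU ((hgij i j).of_le (by simp)) (hΦt_cd i).continuous
      (hΦt_pack i).1 ((hΦt_pack i).2.trans hKtU) j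
  have hIGGpd : ∀ i, Integrable
      (fun x => (fun y => (1/2 : ℝ) * ∑ j, pd j ψ y * pd j ψ y) x
        * pd i (fun y => φ (t, y) i) x) := by
    intro i
    exact (ibp hU (hGG.of_le (by simp)) ((hΦt_cd i).of_le (by simp)) (hΦt_pack i).1
      ((hΦt_pack i).2.trans hKtU) i).1
  refine ⟨integrable_finset_sum _ fun i _ => integrable_finset_sum _ fun j _ => hIb i j, ?_⟩
  rw [integral_finset_sum _ fun i _ => integrable_finset_sum _ fun j _ => hIb i j]
  have hTi : ∀ i, (∫ x, ∑ j, pd i ψ x * (pd j ψ x * pd j (fun y => φ (t, y) i) x))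
      = ∫ x, (fun y => (1/2 : ℝ) * ∑ j, pd j ψ y * pd j ψ y) x
          * pd i (fun y => φ (t, y) i) x := by
    intro i
    rw [integral_finset_sum _ fun j _ => hIb i j]
    have h1 : ∀ j, (∫ x, pd i ψ x * (pd j ψ x * pd j (fun y => φ (t, y) i) x))
        = -∫ x, pd j (fun y => pd i ψ y * pd j ψ y) x * φ (t, x) i := by
      intro j
      rw [show (fun x => pd i ψ x * (pd j ψ x * pd j (fun y => φ (t, y) i) x))
          = fun x => (pd i ψ x * pd j ψ x) * pd j (fun y => φ (t, y) i) x from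
        funext fun x => by ring]
      exact (ibp hU ((hgij i j).of_le (by simp)) ((hΦt_cd i).of_le (by simp)) (hΦt_pack i).1
        ((hΦt_pack i).2.trans hKtU) j).2
    simp only [h1]
    rw [Finset.sum_neg_distrib, ← integral_finset_sum _ fun j _ => hIpdg i j]
    have hPW : ∀ x : E3, (∑ j, pd j (fun y => pd i ψ y * pd j ψ y) x * φ (t, x) i)
        = pd i (fun y => (1/2 : ℝ) * ∑ j, pd j ψ y * pd j ψ y) x * φ (t, x) i := by
      intro x
      rw [← Finset.sum_mul]
      by_cases hx : x ∈ U
      · rw [grad_identity hU hψ hharm hx i]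
      · rw [coord_zero_of_nmem (fun hc => hx (hKtU hc)) i, mul_zero, mul_zero]
    rw [show (fun x => ∑ j, pd j (fun y => pd i ψ y * pd j ψ y) x * φ (t, x) i)
        = fun x => pd i (fun y => (1/2 : ℝ) * ∑ j, pd j ψ y * pd j ψ y) x * φ (t, x) i from
      funext hPW]
    have h2 := (ibp hU (hGG.of_le (by simp)) ((hΦt_cd i).of_le (by simp)) (hΦt_pack i).1
      ((hΦt_pack i).2.trans hKtU) i).2
    rw [h2]
  simp only [hTi]
  rw [← integral_finset_sum _ fun i _ => hIGGpd i]
  have hz : ∀ x : E3, (∑ i, (fun y => (1/2 : ℝ) * ∑ j, pd j ψ y * pd j ψ y) x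
      * pd i (fun y => φ (t, y) i) x) = 0 := by
    intro x
    rw [← Finset.mul_sum,
      show (∑ i, pd i (fun y => φ (t, y) i) x) = divg (fun y => φ (t, y)) x from rfl,
      hdiv t x, mul_zero]
  simp only [hz, integral_zero]

end FixedTimeB

/-- Serrin's example. If `ψ` is harmonic on the ball `B(x₀,r₀)` and
`α ∈ L^∞((a,b))`, then `u(t,x) = α(t) ∇ψ(x)` is divergence-free and is a local weak
solution of the Navier–Stokes equations on `(a,b) × B(x₀,r₀)` with zero force. -/
theorem stmt0 (a b r₀ : ℝ) (x₀ : E3) (hab : a < b) (hr : 0 < r₀)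
    (ψ : E3 → ℝ) (hψ : ContDiffOn ℝ (⊤ : ℕ∞) ψ (ball x₀ r₀))
    (hharm : ∀ x ∈ ball x₀ r₀, lap ψ x = 0)
    (α : ℝ → ℝ) (hα : MemLp α ⊤ (volume.restrict (Ioo a b)))
    (u : ℝ → E3 → E3) (hu : ∀ t x, u t x = fun i => α t * pd i ψ x) :
    (∀ t : ℝ, ∀ x ∈ ball x₀ r₀, divg (u t) x = 0) ∧
    ∀ φ : ℝ × E3 → E3, ContDiff ℝ (⊤ : ℕ∞) φ → HasCompactSupport φ →
      tsupport φ ⊆ Ioo a b ×ˢ ball x₀ r₀ →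
      (∀ (t : ℝ) (x : E3), divg (fun y => φ (t, y)) x = 0) →
      (∫ p : ℝ × E3,
          ((∑ i, u p.1 p.2 i *
              (deriv (fun s => φ (s, p.2) i) p.1 + lap (fun y => φ (p.1, y) i) p.2)) +
            ∑ i, ∑ j, u p.1 p.2 i * (u p.1 p.2 j * pd j (fun y => φ (p.1, y) i) p.2))) = 0 := by

  have hU : IsOpen (ball x₀ r₀) := isOpen_ball
  constructor
  · -- divergence free
    intro t x hx
    unfold divg
    have hpdd : ∀ i : Fin 3, DifferentiableAt ℝ (pd i ψ) x := fun i =>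
      ((pdpsi_smooth hU hψ i).contDiffAt (hU.mem_nhds hx)).differentiableAt (by simp)
    have hterm : ∀ i : Fin 3, pd i (fun y => u t y i) x = α t * pd i (pd i ψ) x := by
      intro i
      have h1 : (fun y => u t y i) = fun y => α t * pd i ψ y := funext fun y => by rw [hu t y]
      rw [h1, pd_const_mul (hpdd i)]
    rw [Finset.sum_congr rfl fun i _ => hterm i, ← Finset.mul_sum,
      show (∑ i, pd i (pd i ψ) x) = lap ψ x from rfl, hharm x hx, mul_zero]
  · -- weak solution
    intro φ hφ hφK hK hdiv
    classical
    obtain ⟨α', hα'm, hα'e⟩ := hα.1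
    set Cα := (eLpNormEssSup α (volume.restrict (Ioo a b))).toReal with hCα
    have hCαfin : eLpNormEssSup α (volume.restrict (Ioo a b)) ≠ ⊤ := by
      have h2 := hα.2
      rw [eLpNorm_exponent_top] at h2
      exact h2.ne
    have hαle : ∀ᵐ t ∂(volume.restrict (Ioo a b)), ‖α t‖ ≤ Cα := by
      filter_upwards [ae_le_eLpNormEssSup (f := α) (μ := volume.restrict (Ioo a b))] with t ht
      calc ‖α t‖ = ((‖α t‖₊ : ENNReal)).toReal := by simp
        _ ≤ Cα := ENNReal.toReal_mono hCαfin ht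
    -- the exceptional set
    set E := {t : ℝ | ¬(α t = α' t ∧ ‖α t‖ ≤ Cα)} with hE
    have hEnull : (volume.restrict (Ioo a b)) E = 0 := by
      have h3 := hα'e.and hαle
      rw [Filter.eventually_iff, mem_ae_iff] at h3
      exact h3
    set N := E ∩ Ioo a b with hN
    have hNnull : volume N = 0 := by
      rw [hN, ← Measure.restrict_apply' measurableSet_Ioo]
      exact hEnull
    set N' := toMeasurable volume N with hN'
    have hN'null : volume N' = 0 := by rw [hN', measure_toMeasurable]; exact hNnull
    have hN'meas : MeasurableSet N' := measurableSet_toMeasurable _ _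
    set K := tsupport φ with hKdef
    have hKc : IsCompact K := hφK
    -- zero off K
    have hS1z : ∀ p : ℝ × E3, p ∉ K → (∑ i, pd i ψ p.2 *
        (deriv (fun s => φ (s, p.2) i) p.1 + lap (fun y => φ (p.1, y) i) p.2)) = 0 := by
      intro p hp
      refine Finset.sum_eq_zero fun i _ => ?_
      have hp' : ((p.1, p.2) : ℝ × E3) ∉ tsupport φ := by simpa using hp
      rw [deriv_zero_of_nmem hp' i, lap_slice_zero_of_nmem hp' i, add_zero, mul_zero]
    have hS2z : ∀ p : ℝ × E3, p ∉ K → (∑ i, ∑ j, pd i ψ p.2 *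
        (pd j ψ p.2 * pd j (fun y => φ (p.1, y) i) p.2)) = 0 := by
      intro p hp
      refine Finset.sum_eq_zero fun i _ => Finset.sum_eq_zero fun j _ => ?_
      have hp' : ((p.1, p.2) : ℝ × E3) ∉ tsupport φ := by simpa using hp
      rw [pd_slice_zero_of_nmem hp' i j, mul_zero, mul_zero]
    -- bounds on K
    have hpdψ : ∀ i, ContDiffOn ℝ (⊤ : ℕ∞) (pd i ψ) (ball x₀ r₀) := pdpsi_smooth hU hψ
    have hmapsto : MapsTo (fun p : ℝ × E3 => p.2) K (ball x₀ r₀) := fun p hp => (hK hp).2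
    have hcont1 : ∀ i : Fin 3, ContinuousOn (fun p : ℝ × E3 => pd i ψ p.2 *
        (deriv (fun s => φ (s, p.2) i) p.1 + lap (fun y => φ (p.1, y) i) p.2)) K := by
      intro i
      refine ContinuousOn.mul ?_ (((cont_Dphi hφ i).add (cont_lap_slice hφ i)).continuousOn)
      exact (hpdψ i).continuousOn.comp continuous_snd.continuousOn hmapsto
    have hcont2 : ∀ i j : Fin 3, ContinuousOn (fun p : ℝ × E3 => pd i ψ p.2 *
        (pd j ψ p.2 * pd j (fun y => φ (p.1, y) i) p.2)) K := by
      intro i j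
      refine ContinuousOn.mul
        ((hpdψ i).continuousOn.comp continuous_snd.continuousOn hmapsto) ?_
      refine ContinuousOn.mul
        ((hpdψ j).continuousOn.comp continuous_snd.continuousOn hmapsto) ?_
      exact (cont_pd_slice hφ i j).continuousOn
    choose C hC using fun i : Fin 3 => hKc.exists_bound_of_continuousOn (hcont1 i)
    choose D hD using fun ij : Fin 3 × Fin 3 =>
      hKc.exists_bound_of_continuousOn (hcont2 ij.1 ij.2)
    set CA := ∑ i : Fin 3, C i with hCA
    set CB := ∑ i : Fin 3, ∑ j : Fin 3, D (i, j) with hCB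
    have hS1le : ∀ p : ℝ × E3, p ∈ K → ‖∑ i, pd i ψ p.2 *
        (deriv (fun s => φ (s, p.2) i) p.1 + lap (fun y => φ (p.1, y) i) p.2)‖ ≤ CA := by
      intro p hp
      refine le_trans (norm_sum_le _ _) (Finset.sum_le_sum fun i _ => hC i p hp)
    have hS2le : ∀ p : ℝ × E3, p ∈ K → ‖∑ i, ∑ j, pd i ψ p.2 *
        (pd j ψ p.2 * pd j (fun y => φ (p.1, y) i) p.2)‖ ≤ CB := by
      intro p hp
      refine le_trans (norm_sum_le _ _) (Finset.sum_le_sum fun i _ => ?_)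
      exact le_trans (norm_sum_le _ _) (Finset.sum_le_sum fun j _ => hD (i, j) p hp)
    -- the measurable version of the integrand
    set F' : ℝ × E3 → ℝ := fun p => α' p.1 * (∑ i, pd i ψ p.2 *
        (deriv (fun s => φ (s, p.2) i) p.1 + lap (fun y => φ (p.1, y) i) p.2))
      + α' p.1 ^ 2 * (∑ i, ∑ j, pd i ψ p.2 *
        (pd j ψ p.2 * pd j (fun y => φ (p.1, y) i) p.2)) with hF'
    have hS1m : Measurable (fun p : ℝ × E3 => ∑ i, pd i ψ p.2 *
        (deriv (fun s => φ (s, p.2) i) p.1 + lap (fun y => φ (p.1, y) i) p.2)) := by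
      apply Finset.measurable_sum
      intro i _
      exact ((measurable_fderiv_apply_const ℝ ψ _).comp measurable_snd).mul
        (((cont_Dphi hφ i).add (cont_lap_slice hφ i)).measurable)
    have hS2m : Measurable (fun p : ℝ × E3 => ∑ i, ∑ j, pd i ψ p.2 *
        (pd j ψ p.2 * pd j (fun y => φ (p.1, y) i) p.2)) := by
      apply Finset.measurable_sum
      intro i _
      apply Finset.measurable_sum
      intro j _
      exact ((measurable_fderiv_apply_const ℝ ψ _).comp measurable_snd).mul
        ((((measurable_fderiv_apply_const ℝ ψ _).comp measurable_snd)).mul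
          (cont_pd_slice hφ i j).measurable)
    have hF'm : AEStronglyMeasurable F' (volume : Measure (ℝ × E3)) :=
      (((hα'm.measurable.comp measurable_fst).mul hS1m).add
        (((hα'm.measurable.comp measurable_fst).pow_const 2).mul hS2m)).aestronglyMeasurable
    set Cb := Cα * CA + Cα ^ 2 * CB with hCb
    have hCα0 : (0 : ℝ) ≤ Cα := ENNReal.toReal_nonneg
    have haeP : ∀ᵐ p : ℝ × E3 ∂volume, p ∉ N' ×ˢ (univ : Set E3) := by
      have hnull : (volume : Measure (ℝ × E3)) (N' ×ˢ (univ : Set E3)) = 0 := by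
        rw [show (volume : Measure (ℝ × E3)) = (volume : Measure ℝ).prod volume from rfl,
          Measure.prod_prod, hN'null, zero_mul]
      rw [ae_iff]
      refine measure_mono_null (fun p hp => ?_) hnull
      simp only [mem_setOf_eq, not_not] at hp
      exact hp
    have hgoodα : ∀ t : ℝ, t ∉ N' → t ∈ Ioo a b → (α t = α' t ∧ ‖α' t‖ ≤ Cα) := by
      intro t htN htI
      have htN2 : t ∉ N := fun hc => htN (subset_toMeasurable _ _ hc)
      have htE : t ∉ E := fun hc => htN2 ⟨hc, htI⟩
      rw [hE, mem_setOf_eq, not_not] at htE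
      exact ⟨htE.1, htE.1 ▸ htE.2⟩
    have hbnd : ∀ᵐ p : ℝ × E3 ∂volume, ‖F' p‖ ≤ K.indicator (fun _ => Cb) p := by
      filter_upwards [haeP] with p hp
      by_cases hpK : p ∈ K
      · have htI : p.1 ∈ Ioo a b := (hK hpK).1
        have htN' : p.1 ∉ N' := fun hc => hp (mem_prod.mpr ⟨hc, mem_univ _⟩)
        obtain ⟨-, hle⟩ := hgoodα p.1 htN' htI
        rw [indicator_of_mem hpK, hCb]
        simp only [hF']
        refine le_trans (norm_add_le _ _) (add_le_add ?_ ?_)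
        · rw [norm_mul]
          exact mul_le_mul hle (hS1le p hpK) (norm_nonneg _) hCα0
        · rw [norm_mul]
          have h4 : ‖α' p.1 ^ 2‖ ≤ Cα ^ 2 := by
            rw [norm_pow]
            exact pow_le_pow_left₀ (norm_nonneg _) hle 2
          exact mul_le_mul h4 (hS2le p hpK) (norm_nonneg _) (pow_nonneg hCα0 2)
      · rw [indicator_of_notMem hpK]
        simp only [hF']
        rw [hS1z p hpK, hS2z p hpK, mul_zero, mul_zero, add_zero, norm_zero]
    have hbound_int : Integrable (K.indicator fun _ : ℝ × E3 => Cb) := by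
      rw [integrable_indicator_iff hKc.isClosed.measurableSet]
      exact integrableOn_const hKc.measure_lt_top.ne
    have hF'int : Integrable F' := Integrable.mono' hbound_int hF'm hbnd
    have hcongr : (fun p : ℝ × E3 =>
        ((∑ i, u p.1 p.2 i *
            (deriv (fun s => φ (s, p.2) i) p.1 + lap (fun y => φ (p.1, y) i) p.2)) +
          ∑ i, ∑ j, u p.1 p.2 i * (u p.1 p.2 j * pd j (fun y => φ (p.1, y) i) p.2)))
        =ᵐ[volume] F' := by
      filter_upwards [haeP] with p hp
      have hstep1 : ((∑ i, u p.1 p.2 i *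
            (deriv (fun s => φ (s, p.2) i) p.1 + lap (fun y => φ (p.1, y) i) p.2)) +
          ∑ i, ∑ j, u p.1 p.2 i * (u p.1 p.2 j * pd j (fun y => φ (p.1, y) i) p.2))
          = α p.1 * (∑ i, pd i ψ p.2 *
              (deriv (fun s => φ (s, p.2) i) p.1 + lap (fun y => φ (p.1, y) i) p.2))
            + α p.1 ^ 2 * (∑ i, ∑ j, pd i ψ p.2 *
              (pd j ψ p.2 * pd j (fun y => φ (p.1, y) i) p.2)) := by
        simp only [hu]
        rw [Finset.mul_sum, Finset.mul_sum]
        congr 1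
        · exact Finset.sum_congr rfl fun i _ => by ring
        · refine Finset.sum_congr rfl fun i _ => ?_
          rw [Finset.mul_sum]
          exact Finset.sum_congr rfl fun j _ => by ring
      rw [hstep1]
      by_cases hpK : p ∈ K
      · have heqα : α p.1 = α' p.1 :=
          (hgoodα p.1 (fun hc => hp (mem_prod.mpr ⟨hc, mem_univ _⟩)) (hK hpK).1).1
        simp only [hF']
        rw [heqα]
      · simp only [hF']
        rw [hS1z p hpK, hS2z p hpK]
        ring
    rw [integral_congr_ae hcongr]
    rw [show (volume : Measure (ℝ × E3)) = (volume : Measure ℝ).prod volume from rfl]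
      at hF'int ⊢
    rw [integral_prod _ hF'int]
    have hinner : ∀ t : ℝ, (∫ x : E3, F' (t, x)) = 0 := by
      intro t
      have hA := inner_A_zero hψ hharm hφ hφK hK hdiv t
      have hB := inner_B_zero hψ hharm hφ hφK hK hdiv t
      simp only [hF']
      rw [integral_add (hA.1.const_mul _) (hB.1.const_mul _), integral_const_mul,
        integral_const_mul, hA.2, hB.2, mul_zero, mul_zero, add_zero]
    simp only [hinner, integral_zero]
end
end

section
/- Let w₁, w₂ ∈ L^∞_t L²_x ∩ L²_t H¹_x(Q) and w₃ ∈ L^∞_t Lip_x(Q) on a space-time cylinder Q. Let φ be a smooth compactly supported mollifier on ℝ³. Then for each k ∈ {1,2,3}, lim_{ε→0} ∫ (1/ε³) ∂_k φ(y/ε) · [ (w₁(t, x−y) − w₁(t,x)) (w₂(t, x−y) − w₂(t,x)) (w₃(t, x−y) − w₃(t,x)) / ε ] dy = 0 in the sense of distributions on Q (indeed in L¹ on compact subcylinders). -/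
set_option maxHeartbeats 1000000

open MeasureTheory Metric Filter Set Function
open scoped ENNReal NNReal

noncomputable section

/-- The shifted-difference preimage of a null set is null for the product measure. -/
lemma stmt8_null_preimage (Q' : Set (ℝ × E3)) (hQ'm : MeasurableSet Q')
    (E' : Set (ℝ × E3)) (hE'm : MeasurableSet E') (h0 : volume E' = 0) :
    ((volume.restrict Q').prod (volume : Measure E3))
      {z : (ℝ × E3) × E3 | (z.1.1, z.1.2 - z.2) ∈ E'} = 0 := by
  have hm : Measurable (fun z : (ℝ × E3) × E3 => (z.1.1, z.1.2 - z.2)) := by fun_prop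
  have hSm : MeasurableSet {z : (ℝ × E3) × E3 | (z.1.1, z.1.2 - z.2) ∈ E'} := hm hE'm
  have hle : ((volume.restrict Q').prod (volume : Measure E3))
      {z : (ℝ × E3) × E3 | (z.1.1, z.1.2 - z.2) ∈ E'}
      ≤ ((volume : Measure (ℝ × E3)).prod (volume : Measure E3))
        {z : (ℝ × E3) × E3 | (z.1.1, z.1.2 - z.2) ∈ E'} := by
    rw [Measure.restrict_prod_eq_prod_univ, Measure.restrict_apply hSm]
    exact measure_mono inter_subset_left
  refine le_antisymm (hle.trans ?_) (zero_le)
  -- slices in the time variable are null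
  have hslice : ∀ᵐ t : ℝ, volume (Prod.mk t ⁻¹' E') = 0 := by
    have h0' : ((volume : Measure ℝ).prod (volume : Measure E3)) E' = 0 := by
      rw [← Measure.volume_eq_prod]; exact h0
    have := (Measure.measure_prod_null hE'm).mp h0'
    filter_upwards [this] with t ht using ht
  -- the bad set of times, as a measurable set
  set B : Set ℝ := {t | volume (Prod.mk t ⁻¹' E') ≠ 0} with hB
  have hBm : MeasurableSet B := by
    have := measurable_measure_prodMk_left (ν := (volume : Measure E3)) hE'm
    exact this (measurableSet_singleton 0).compl
  have hB0 : volume B = 0 := by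
    rw [ae_iff] at hslice
    exact hslice
  have hae : ∀ᵐ p : ℝ × E3, volume (Prod.mk p.1 ⁻¹' E') = 0 := by
    rw [ae_iff]
    have hset : {p : ℝ × E3 | ¬ volume (Prod.mk p.1 ⁻¹' E') = 0} = B ×ˢ (univ : Set E3) := by
      ext p; simp [hB, Set.mem_prod]
    rw [hset, Measure.volume_eq_prod, Measure.prod_prod, hB0, zero_mul]
  have hzero : ∀ᵐ p : ℝ × E3,
      (volume : Measure E3) (Prod.mk p ⁻¹' {z : (ℝ × E3) × E3 | (z.1.1, z.1.2 - z.2) ∈ E'}) = 0 := by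
    filter_upwards [hae] with p hp
    have heq : Prod.mk p ⁻¹' {z : (ℝ × E3) × E3 | (z.1.1, z.1.2 - z.2) ∈ E'}
        = (fun y : E3 => p.2 - y) ⁻¹' (Prod.mk p.1 ⁻¹' E') := rfl
    rw [heq, (Measure.measurePreserving_sub_left volume p.2).measure_preimage
      ((measurable_prodMk_left hE'm).nullMeasurableSet), hp]
  have h2 : ((volume : Measure (ℝ × E3)).prod (volume : Measure E3))
      {z : (ℝ × E3) × E3 | (z.1.1, z.1.2 - z.2) ∈ E'} = 0 := by
    rw [Measure.prod_apply hSm, lintegral_congr_ae hzero, lintegral_zero]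
  exact h2 ▸ le_rfl

/-- key trilinear increment estimate of Duchon–Robert. If
`w₁, w₂ ∈ L^∞_t L²_x ∩ L²_t H¹_x(Q)` (with weak spatial gradients `g₁, g₂`) and `w₃` is
bounded and spatially Lipschitz uniformly in time, then for any mollifier `φ` and any
`k`, the trilinear quantity
`∫ ε⁻³ ∂_k φ(y/ε) (δ_y w₁)(δ_y w₂)(δ_y w₃)/ε dy` tends to `0` in `L¹` on compact
subcylinders of `Q` as `ε → 0⁺`. -/
theorem stmt8 (a b r₀ : ℝ) (x₀ : E3) (hab : a < b) (hr : 0 < r₀)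
    (Q : Set (ℝ × E3)) (hQ : Q = Ioo a b ×ˢ ball x₀ r₀)
    (w₁ w₂ w₃ : ℝ × E3 → ℝ) (g₁ g₂ : ℝ × E3 → E3)
    (hw₁ : MemLp w₁ 2 (volume.restrict Q)) (hw₂ : MemLp w₂ 2 (volume.restrict Q))
    (hw₁infty : ∃ C : ℝ, ∀ᵐ t ∂(volume.restrict (Ioo a b)),
      (∫ x in ball x₀ r₀, w₁ (t, x) ^ 2) ≤ C)
    (hw₂infty : ∃ C : ℝ, ∀ᵐ t ∂(volume.restrict (Ioo a b)),
      (∫ x in ball x₀ r₀, w₂ (t, x) ^ 2) ≤ C)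
    (hg₁ : ∀ i, MemLp (fun p => g₁ p i) 2 (volume.restrict Q))
    (hg₂ : ∀ i, MemLp (fun p => g₂ p i) 2 (volume.restrict Q))
    -- `g₁`, `g₂` are the weak spatial gradients of `w₁`, `w₂` on `Q`
    (hweak₁ : ∀ φ : ℝ × E3 → ℝ, ContDiff ℝ (⊤ : ℕ∞) φ → HasCompactSupport φ → tsupport φ ⊆ Q →
      ∀ i, (∫ p in Q, w₁ p * pd i (fun y => φ (p.1, y)) p.2) = -∫ p in Q, g₁ p i * φ p)
    (hweak₂ : ∀ φ : ℝ × E3 → ℝ, ContDiff ℝ (⊤ : ℕ∞) φ → HasCompactSupport φ → tsupport φ ⊆ Q →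
      ∀ i, (∫ p in Q, w₂ p * pd i (fun y => φ (p.1, y)) p.2) = -∫ p in Q, g₂ p i * φ p)
    -- `w₃ ∈ L^∞_t Lip_x`
    (hw₃lip : ∃ L : NNReal, ∀ t : ℝ, LipschitzWith L (fun x => w₃ (t, x)))
    (hw₃bdd : ∃ M : ℝ, ∀ p, |w₃ p| ≤ M)
    -- the mollifier
    (φm : E3 → ℝ) (hφm : ContDiff ℝ (⊤ : ℕ∞) φm) (hφmsupp : HasCompactSupport φm)
    (hφmint : (∫ y : E3, φm y) = 1) :
    ∀ k : Fin 3, ∀ (a' b' r₁ : ℝ) (x₁ : E3),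
      closure (Ioo a' b' ×ˢ ball x₁ r₁) ⊆ Q →
      Tendsto (fun ε : ℝ => ∫ p in Ioo a' b' ×ˢ ball x₁ r₁,
          |∫ y : E3, ε⁻¹ ^ 3 * pd k φm (ε⁻¹ • y) *
            ((w₁ (p.1, p.2 - y) - w₁ p) * (w₂ (p.1, p.2 - y) - w₂ p)
              * (w₃ (p.1, p.2 - y) - w₃ p) / ε)|)
        (nhdsWithin 0 (Ioi 0)) (nhds 0) := by
  intro k a' b' r₁ x₁ hcl
  haveI : Fact ((1 : ℝ≥0∞) ≤ 2) := ⟨one_le_two⟩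
  set Q' : Set (ℝ × E3) := Ioo a' b' ×ˢ ball x₁ r₁ with hQ'def
  have hQ'm : MeasurableSet Q' := measurableSet_Ioo.prod measurableSet_ball
  have hQm : MeasurableSet Q := by rw [hQ]; exact measurableSet_Ioo.prod measurableSet_ball
  have hQopen : IsOpen Q := by rw [hQ]; exact isOpen_Ioo.prod isOpen_ball
  obtain ⟨L, hL⟩ := hw₃lip
  set Lr : ℝ := (L : ℝ) with hLr
  have hLr0 : 0 ≤ Lr := L.2
  -- bound and support data for the mollifier derivative
  have hpdc : Continuous (pd k φm) :=
    (ContinuousLinearMap.apply ℝ ℝ (Pi.single k 1)).continuous.comp (hφm.continuous_fderiv (by simp))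
  have hpdsupp : support (pd k φm) ⊆ tsupport φm := by
    intro x hx
    have : fderiv ℝ φm x ≠ 0 := by
      intro h; apply hx; simp [pd, h]
    exact support_fderiv_subset ℝ this
  have hpdCompact : HasCompactSupport (pd k φm) := hφmsupp.mono' hpdsupp
  obtain ⟨Cφ, hCφ⟩ := hpdCompact.exists_bound_of_continuous hpdc
  have hCφ0 : 0 ≤ Cφ := le_trans (norm_nonneg _) (hCφ 0)
  obtain ⟨R₀, hR₀⟩ := hφmsupp.isCompact.isBounded.subset_closedBall (0 : E3)
  set R : ℝ := max R₀ 1 with hRdef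
  have hR0 : 0 < R := lt_of_lt_of_le one_pos (le_max_right _ _)
  have hRsupp : tsupport φm ⊆ closedBall (0 : E3) R :=
    hR₀.trans (closedBall_subset_closedBall (le_max_left _ _))
  -- safety margin δ₀
  have hK : IsCompact (closure Q') :=
    ((Metric.isBounded_Ioo a' b').prod isBounded_ball).isCompact_closure
  obtain ⟨δ₀, hδ₀pos, hδ₀⟩ := hK.exists_thickening_subset_open hQopen hcl
  have hQ'subQ : Q' ⊆ Q := subset_closure.trans hcl
  -- measurable modifications of w₁, w₂
  set W₁ : ℝ × E3 → ℝ := Q.indicator (hw₁.1.mk w₁) with hW₁def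
  set W₂ : ℝ × E3 → ℝ := Q.indicator (hw₂.1.mk w₂) with hW₂def
  have hW₁m : StronglyMeasurable W₁ := hw₁.1.stronglyMeasurable_mk.indicator hQm
  have hW₂m : StronglyMeasurable W₂ := hw₂.1.stronglyMeasurable_mk.indicator hQm
  have hW₁ae : w₁ =ᵐ[volume.restrict Q] W₁ :=
    hw₁.1.ae_eq_mk.trans (indicator_ae_eq_restrict hQm).symm
  have hW₂ae : w₂ =ᵐ[volume.restrict Q] W₂ :=
    hw₂.1.ae_eq_mk.trans (indicator_ae_eq_restrict hQm).symm
  have hW₁mem : MemLp W₁ 2 volume :=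
    (memLp_indicator_iff_restrict hQm).2 (hw₁.ae_eq hw₁.1.ae_eq_mk)
  have hW₂mem : MemLp W₂ 2 volume :=
    (memLp_indicator_iff_restrict hQm).2 (hw₂.ae_eq hw₂.1.ae_eq_mk)
  -- the exceptional null set
  have hEnull : volume ({q | ¬ (w₁ q = W₁ q ∧ w₂ q = W₂ q)} ∩ Q) = 0 := by
    have h : ∀ᵐ q ∂volume.restrict Q, w₁ q = W₁ q ∧ w₂ q = W₂ q := hW₁ae.and hW₂ae
    rw [ae_iff] at h
    rwa [Measure.restrict_apply' hQm] at h
  set E' : Set (ℝ × E3) := toMeasurable volume ({q | ¬ (w₁ q = W₁ q ∧ w₂ q = W₂ q)} ∩ Q)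
    with hE'def
  have hE'm : MeasurableSet E' := measurableSet_toMeasurable _ _
  have hE'0 : volume E' = 0 := by rw [hE'def, measure_toMeasurable]; exact hEnull
  have hE'sub : {q | ¬ (w₁ q = W₁ q ∧ w₂ q = W₂ q)} ∩ Q ⊆ E' := subset_toMeasurable _ _
  -- translation operators on L²
  set τ : E3 → C(ℝ × E3, ℝ × E3) := fun y => ⟨fun p => (p.1, p.2 - y), by fun_prop⟩ with hτdef
  have hτ : ∀ y : E3, MeasurePreserving (τ y) volume volume := by
    intro y
    rw [Measure.volume_eq_prod]
    exact (MeasurePreserving.id volume).prod (measurePreserving_sub_right volume y)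
  have hτcont : Continuous τ := by
    apply ContinuousMap.continuous_of_continuous_uncurry
    show Continuous fun z : E3 × (ℝ × E3) => ((z.2.1, z.2.2 - z.1) : ℝ × E3)
    fun_prop
  -- the L² moduli of continuity
  set b₁ : E3 → ℝ≥0∞ := fun y =>
    eLpNorm (fun p : ℝ × E3 => W₁ (p.1, p.2 - y) - W₁ p) 2 volume with hb₁def
  set b₂ : E3 → ℝ≥0∞ := fun y =>
    eLpNorm (fun p : ℝ × E3 => W₂ (p.1, p.2 - y) - W₂ p) 2 volume with hb₂def
  have hbtendsto : ∀ (W : ℝ × E3 → ℝ) (hWmem : MemLp W 2 volume),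
      Tendsto (fun y : E3 => eLpNorm (fun p : ℝ × E3 => W (p.1, p.2 - y) - W p) 2 volume)
        (nhds 0) (nhds 0) := by
    intro W hWmem
    set T : E3 → Lp ℝ 2 (volume : Measure (ℝ × E3)) := fun y =>
      Lp.compMeasurePreserving (τ y) (hτ y) (hWmem.toLp W) with hTdef
    have hTcont : Continuous T :=
      Continuous.compMeasurePreservingLp continuous_const hτcont hτ (by norm_num)
    have hcoe : ∀ y : E3, (fun p : ℝ × E3 => W (p.1, p.2 - y)) =ᵐ[volume] ⇑(T y) := by
      intro y
      have h1 : ⇑(T y) =ᵐ[volume] ⇑(hWmem.toLp W) ∘ (τ y) :=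
        Lp.coeFn_compMeasurePreserving _ (hτ y)
      have h2 : ⇑(hWmem.toLp W) ∘ (τ y) =ᵐ[volume] W ∘ (τ y) := by
        apply ae_eq_comp (hτ y).aemeasurable
        rw [(hτ y).map_eq]
        exact hWmem.coeFn_toLp
      exact (h1.trans h2).symm
    have hkey : ∀ y : E3,
        eLpNorm (fun p : ℝ × E3 => W (p.1, p.2 - y) - W p) 2 volume = edist (T y) (T 0) := by
      intro y
      rw [Lp.edist_def]
      apply eLpNorm_congr_ae
      have h0 : (fun p : ℝ × E3 => W (p.1, p.2 - 0)) =ᵐ[volume] ⇑(T 0) := hcoe 0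
      have h0' : (fun p : ℝ × E3 => W p) =ᵐ[volume] ⇑(T 0) := by
        simpa using h0
      filter_upwards [hcoe y, h0'] with p h1 h2
      simp [h1, h2]
    simp only [hkey]
    have := ((hTcont.tendsto 0).edist (tendsto_const_nhds (x := T 0)))
    simpa using this
  have hb₁0 : Tendsto b₁ (nhds 0) (nhds 0) := hbtendsto W₁ hW₁mem
  have hb₂0 : Tendsto b₂ (nhds 0) (nhds 0) := hbtendsto W₂ hW₂mem
  -- the constant in the final bound
  set K : ℝ := Cφ * (Lr * R) * (2 * R) ^ 3 with hKdef
  have hK0 : 0 ≤ K := by positivity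
  rw [Metric.tendsto_nhdsWithin_nhds]
  intro η' hη'
  set η : ℝ := min 1 (η' / (2 * (K + 1))) with hηdef
  have hηpos : 0 < η := lt_min one_pos (by positivity)
  have hη1 : η ≤ 1 := min_le_left _ _
  have hη2 : η * (2 * (K + 1)) ≤ η' := by
    have : η ≤ η' / (2 * (K + 1)) := min_le_right _ _
    rw [le_div_iff₀ (by positivity)] at this
    linarith
  have hKη : K * (η * η) < η' := by nlinarith
  -- choose δ's from the tendsto facts
  have hofη : (0 : ℝ≥0∞) < ENNReal.ofReal η := ENNReal.ofReal_pos.2 hηpos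
  obtain ⟨δ₁, hδ₁pos, hδ₁⟩ := Metric.eventually_nhds_iff.mp (hb₁0 (Iio_mem_nhds hofη))
  obtain ⟨δ₂, hδ₂pos, hδ₂⟩ := Metric.eventually_nhds_iff.mp (hb₂0 (Iio_mem_nhds hofη))
  set δ : ℝ := min δ₀ (min δ₁ δ₂) with hδdef
  have hδpos : 0 < δ := lt_min hδ₀pos (lt_min hδ₁pos hδ₂pos)
  refine ⟨δ / R, by positivity, ?_⟩
  intro ε hε hdist
  have hε0 : 0 < ε := hε
  rw [Real.dist_eq, sub_zero, abs_of_pos hε0] at hdist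
  have hεR : ε * R < δ := by
    rw [← lt_div_iff₀ hR0] at *; exact hdist
  have hεRδ₀ : ε * R < δ₀ := lt_of_lt_of_le hεR (min_le_left _ _)
  have hεRδ₁ : ε * R < δ₁ := lt_of_lt_of_le hεR ((min_le_right _ _).trans (min_le_left _ _))
  have hεRδ₂ : ε * R < δ₂ := lt_of_lt_of_le hεR ((min_le_right _ _).trans (min_le_right _ _))
  have hεR0 : 0 < ε * R := by positivity
  -- abbreviations for the inner integrals
  set innerw : ℝ × E3 → ℝ := fun p => ∫ y : E3, ε⁻¹ ^ 3 * pd k φm (ε⁻¹ • y) *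
      ((w₁ (p.1, p.2 - y) - w₁ p) * (w₂ (p.1, p.2 - y) - w₂ p)
        * (w₃ (p.1, p.2 - y) - w₃ p) / ε) with hinnerwdef
  set innerW : ℝ × E3 → ℝ := fun p => ∫ y : E3, ε⁻¹ ^ 3 * pd k φm (ε⁻¹ • y) *
      ((W₁ (p.1, p.2 - y) - W₁ p) * (W₂ (p.1, p.2 - y) - W₂ p)
        * (w₃ (p.1, p.2 - y) - w₃ p) / ε) with hinnerWdef
  -- Step A : a.e. equality of the inner integrals on Q'
  have hpd_zero : ∀ y : E3, ¬ (‖y‖ ≤ ε * R) → pd k φm (ε⁻¹ • y) = 0 := by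
    intro y hy
    by_contra h
    have h1 : ε⁻¹ • y ∈ tsupport φm := hpdsupp h
    have h2 : ‖ε⁻¹ • y‖ ≤ R := by
      have := hRsupp h1
      rwa [mem_closedBall, dist_zero_right] at this
    rw [norm_smul, Real.norm_eq_abs, abs_of_pos (by positivity)] at h2
    apply hy
    calc ‖y‖ = ε * (ε⁻¹ * ‖y‖) := by
          rw [← mul_assoc, mul_inv_cancel₀ hε0.ne', one_mul]
    _ ≤ ε * R := mul_le_mul_of_nonneg_left h2 hε0.le
  have hStepA : ∀ᵐ p ∂volume.restrict Q', innerw p = innerW p := by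
    have hnull := stmt8_null_preimage Q' hQ'm E' hE'm hE'0
    have hae1 : ∀ᵐ p ∂volume.restrict Q', ∀ᵐ y : E3, (p.1, p.2 - y) ∉ E' := by
      have hz : ∀ᵐ z ∂((volume.restrict Q').prod (volume : Measure E3)),
          (z.1.1, z.1.2 - z.2) ∉ E' := by
        rw [ae_iff]
        simp only [not_not]
        exact hnull
      exact Measure.ae_ae_of_ae_prod hz
    have hae2 : ∀ᵐ p ∂volume.restrict Q', p ∉ E' := by
      rw [ae_iff]
      simp only [not_not]
      refine le_antisymm ?_ (zero_le)
      calc (volume.restrict Q') {p | p ∈ E'} = volume (E' ∩ Q') := by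
            rw [Measure.restrict_apply' hQ'm]; rfl
      _ ≤ volume E' := measure_mono inter_subset_left
      _ = 0 := hE'0
    have hae3 : ∀ᵐ p ∂volume.restrict Q', p ∈ Q' := ae_restrict_mem hQ'm
    filter_upwards [hae1, hae2, hae3] with p hp1 hp2 hp3
    have hpQ : p ∈ Q := hQ'subQ hp3
    have hpW : w₁ p = W₁ p ∧ w₂ p = W₂ p := by
      by_contra h
      exact hp2 (hE'sub ⟨h, hpQ⟩)
    apply integral_congr_ae
    filter_upwards [hp1] with y hy
    by_cases hyR : ‖y‖ ≤ ε * R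
    · have hdy : dist (p.2 - y) p.2 = ‖y‖ := by
        rw [dist_eq_norm, sub_sub_cancel_left, norm_neg]
      have hdistp : dist ((p.1, p.2 - y) : ℝ × E3) p = ‖y‖ := by
        rw [Prod.dist_eq]
        simp only [dist_self, hdy]
        exact max_eq_right (norm_nonneg y)
      have hqQ : (p.1, p.2 - y) ∈ Q := by
        apply hδ₀
        rw [Metric.mem_thickening_iff]
        exact ⟨p, subset_closure hp3, by rw [hdistp]; exact lt_of_le_of_lt hyR hεRδ₀⟩
      have hqW : w₁ (p.1, p.2 - y) = W₁ (p.1, p.2 - y) ∧ w₂ (p.1, p.2 - y) = W₂ (p.1, p.2 - y) := by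
        by_contra h
        exact hy (hE'sub ⟨h, hqQ⟩)
      rw [hpW.1, hpW.2, hqW.1, hqW.2]
    · rw [hpd_zero y hyR, mul_zero, zero_mul, zero_mul]
  -- the dominating kernel
  set c : ℝ≥0∞ := ENNReal.ofReal (ε⁻¹ ^ 3 * Cφ * (Lr * R)) with hcdef
  set Φ : (ℝ × E3) → E3 → ℝ≥0∞ := fun p y =>
    (closedBall (0 : E3) (ε * R)).indicator (fun _ => (1 : ℝ≥0∞)) y *
      (c * ((‖W₁ (p.1, p.2 - y) - W₁ p‖₊ : ℝ≥0∞) * (‖W₂ (p.1, p.2 - y) - W₂ p‖₊ : ℝ≥0∞)))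
    with hΦdef
  -- pointwise bound on the integrand
  have hΦbound : ∀ p y, (‖ε⁻¹ ^ 3 * pd k φm (ε⁻¹ • y) *
      ((W₁ (p.1, p.2 - y) - W₁ p) * (W₂ (p.1, p.2 - y) - W₂ p)
        * (w₃ (p.1, p.2 - y) - w₃ p) / ε)‖₊ : ℝ≥0∞) ≤ Φ p y := by
    intro p y
    by_cases hyR : ‖y‖ ≤ ε * R
    · have hy' : y ∈ closedBall (0 : E3) (ε * R) := by
        rwa [mem_closedBall, dist_zero_right]
      have hΦval : Φ p y = c * ((‖W₁ (p.1, p.2 - y) - W₁ p‖₊ : ℝ≥0∞)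
          * (‖W₂ (p.1, p.2 - y) - W₂ p‖₊ : ℝ≥0∞)) := by
        rw [hΦdef]
        simp only [indicator_of_mem hy', one_mul]
      rw [hΦval]
      set d1 : ℝ := W₁ (p.1, p.2 - y) - W₁ p with hd1
      set d2 : ℝ := W₂ (p.1, p.2 - y) - W₂ p with hd2
      set d3 : ℝ := w₃ (p.1, p.2 - y) - w₃ p with hd3
      have h3 : |d3| ≤ Lr * ‖y‖ := by
        have hdy : dist (p.2 - y) p.2 = ‖y‖ := by
          rw [dist_eq_norm, sub_sub_cancel_left, norm_neg]
        have := (hL p.1).dist_le_mul (p.2 - y) p.2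
        rw [hdy, Real.dist_eq] at this
        rw [hd3]
        exact this
      have hpdb : |pd k φm (ε⁻¹ • y)| ≤ Cφ := by
        have := hCφ (ε⁻¹ • y); rwa [Real.norm_eq_abs] at this
      have habs : |ε⁻¹ ^ 3 * pd k φm (ε⁻¹ • y) * (d1 * d2 * d3 / ε)|
          ≤ (ε⁻¹ ^ 3 * Cφ * (Lr * R)) * (|d1| * |d2|) := by
        have hrw : ε⁻¹ ^ 3 * pd k φm (ε⁻¹ • y) * (d1 * d2 * d3 / ε)
            = (ε⁻¹ ^ 3 * pd k φm (ε⁻¹ • y)) * (d1 * d2) * (d3 * ε⁻¹) := by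
          field_simp
        rw [hrw, abs_mul, abs_mul]
        have h1 : |ε⁻¹ ^ 3 * pd k φm (ε⁻¹ • y)| ≤ ε⁻¹ ^ 3 * Cφ := by
          rw [abs_mul, abs_of_nonneg (by positivity : (0:ℝ) ≤ ε⁻¹ ^ 3)]
          exact mul_le_mul_of_nonneg_left hpdb (by positivity)
        have h2 : |d1 * d2| = |d1| * |d2| := abs_mul _ _
        have h4 : |d3 * ε⁻¹| ≤ Lr * R := by
          rw [abs_mul, abs_of_nonneg (by positivity : (0:ℝ) ≤ ε⁻¹)]
          calc |d3| * ε⁻¹ ≤ (Lr * (ε * R)) * ε⁻¹ := by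
                apply mul_le_mul_of_nonneg_right _ (by positivity)
                exact h3.trans (mul_le_mul_of_nonneg_left hyR hLr0)
          _ = Lr * R := by field_simp
        calc |ε⁻¹ ^ 3 * pd k φm (ε⁻¹ • y)| * |d1 * d2| * |d3 * ε⁻¹|
            ≤ (ε⁻¹ ^ 3 * Cφ) * |d1 * d2| * (Lr * R) := by
              gcongr <;> positivity
        _ = (ε⁻¹ ^ 3 * Cφ * (Lr * R)) * (|d1| * |d2|) := by rw [h2]; ring
      calc (‖ε⁻¹ ^ 3 * pd k φm (ε⁻¹ • y) * (d1 * d2 * d3 / ε)‖₊ : ℝ≥0∞)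
          = ENNReal.ofReal |ε⁻¹ ^ 3 * pd k φm (ε⁻¹ • y) * (d1 * d2 * d3 / ε)| :=
            Real.enorm_eq_ofReal_abs _
      _ ≤ ENNReal.ofReal ((ε⁻¹ ^ 3 * Cφ * (Lr * R)) * (|d1| * |d2|)) :=
            ENNReal.ofReal_le_ofReal habs
      _ = c * ((‖d1‖₊ : ℝ≥0∞) * (‖d2‖₊ : ℝ≥0∞)) := by
            rw [ENNReal.ofReal_mul (by positivity), ENNReal.ofReal_mul (abs_nonneg _),
              ← Real.enorm_eq_ofReal_abs, ← Real.enorm_eq_ofReal_abs, hcdef]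
            rfl
    · rw [hpd_zero y hyR, mul_zero, zero_mul]
      simp
  -- measurability facts
  have hmove : Measurable fun z : (ℝ × E3) × E3 => ((z.1.1, z.1.2 - z.2) : ℝ × E3) := by
    fun_prop
  have hm1 : Measurable fun z : (ℝ × E3) × E3 => W₁ (z.1.1, z.1.2 - z.2) - W₁ z.1 :=
    (hW₁m.measurable.comp hmove).sub (hW₁m.measurable.comp measurable_fst)
  have hm2 : Measurable fun z : (ℝ × E3) × E3 => W₂ (z.1.1, z.1.2 - z.2) - W₂ z.1 :=
    (hW₂m.measurable.comp hmove).sub (hW₂m.measurable.comp measurable_fst)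
  have hΦmeas : AEMeasurable (Function.uncurry Φ)
      ((volume.restrict Q').prod (volume : Measure E3)) := by
    apply Measurable.aemeasurable
    have : Function.uncurry Φ = fun z : (ℝ × E3) × E3 =>
        (closedBall (0 : E3) (ε * R)).indicator (fun _ => (1 : ℝ≥0∞)) z.2 *
          (c * ((‖W₁ (z.1.1, z.1.2 - z.2) - W₁ z.1‖₊ : ℝ≥0∞)
            * (‖W₂ (z.1.1, z.1.2 - z.2) - W₂ z.1‖₊ : ℝ≥0∞))) := rfl
    rw [this]
    exact ((measurable_const.indicator measurableSet_closedBall).comp measurable_snd).mul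
      (measurable_const.mul (hm1.enorm.mul hm2.enorm))
  -- the main lintegral estimate
  have hconj : Real.HolderConjugate 2 2 := Real.HolderConjugate.two_two
  have hlin : (∫⁻ p in Q', ENNReal.ofReal |innerw p|) ≤ ENNReal.ofReal (K * (η * η)) := by
    have hcongr : (∫⁻ p in Q', ENNReal.ofReal |innerw p|)
        = ∫⁻ p in Q', ENNReal.ofReal |innerW p| :=
      lintegral_congr_ae (hStepA.mono fun p hp => by dsimp only; rw [hp])
    rw [hcongr]
    have hstep1 : (∫⁻ p in Q', ENNReal.ofReal |innerW p|)
        ≤ ∫⁻ p in Q', ∫⁻ y : E3, Φ p y := by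
      apply lintegral_mono
      intro p
      calc ENNReal.ofReal |innerW p| = (‖innerW p‖₊ : ℝ≥0∞) :=
            (Real.enorm_eq_ofReal_abs _).symm
      _ ≤ ∫⁻ y : E3, ‖ε⁻¹ ^ 3 * pd k φm (ε⁻¹ • y) *
            ((W₁ (p.1, p.2 - y) - W₁ p) * (W₂ (p.1, p.2 - y) - W₂ p)
              * (w₃ (p.1, p.2 - y) - w₃ p) / ε)‖₊ := enorm_integral_le_lintegral_enorm _
      _ ≤ ∫⁻ y : E3, Φ p y := lintegral_mono (hΦbound p)
    refine hstep1.trans ?_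
    rw [lintegral_lintegral_swap hΦmeas]
    have hstep3 : (∫⁻ y : E3, ∫⁻ p in Q', Φ p y)
        ≤ ∫⁻ y : E3, (closedBall (0 : E3) (ε * R)).indicator
            (fun _ => c * (ENNReal.ofReal η * ENNReal.ofReal η)) y := by
      apply lintegral_mono
      intro y
      by_cases hy : y ∈ closedBall (0 : E3) (ε * R)
      · have hΦy : ∀ p, Φ p y = c * ((‖W₁ (p.1, p.2 - y) - W₁ p‖₊ : ℝ≥0∞)
            * (‖W₂ (p.1, p.2 - y) - W₂ p‖₊ : ℝ≥0∞)) := by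
          intro p
          rw [hΦdef]
          simp only [indicator_of_mem hy, one_mul]
        simp only [hΦy, indicator_of_mem hy]
        rw [lintegral_const_mul' _ _ ENNReal.ofReal_ne_top]
        apply mul_le_mul_right
        have hy' : ‖y‖ ≤ ε * R := by rwa [mem_closedBall, dist_zero_right] at hy
        have hHolder := ENNReal.lintegral_mul_le_Lp_mul_Lq (volume.restrict Q') hconj
          ((hW₁m.measurable.comp (show Measurable fun p : ℝ × E3 => ((p.1, p.2 - y) : ℝ × E3)
            by fun_prop)).sub hW₁m.measurable).enorm.aemeasurable
          ((hW₂m.measurable.comp (show Measurable fun p : ℝ × E3 => ((p.1, p.2 - y) : ℝ × E3)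
            by fun_prop)).sub hW₂m.measurable).enorm.aemeasurable
        refine le_trans hHolder (mul_le_mul' ?_ ?_)
        · have hb : b₁ y < ENNReal.ofReal η := by
            apply hδ₁
            rw [dist_zero_right]
            exact lt_of_le_of_lt hy' hεRδ₁
          refine le_trans ?_ hb.le
          simp only [hb₁def]
          rw [eLpNorm_eq_lintegral_rpow_enorm_toReal (by simp : (2:ℝ≥0∞) ≠ 0) (by simp : (2:ℝ≥0∞) ≠ ∞)]
          simp only [ENNReal.toReal_ofNat]
          apply ENNReal.rpow_le_rpow _ (by norm_num : (0:ℝ) ≤ 1 / 2)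
          exact lintegral_mono' Measure.restrict_le_self le_rfl
        · have hb : b₂ y < ENNReal.ofReal η := by
            apply hδ₂
            rw [dist_zero_right]
            exact lt_of_le_of_lt hy' hεRδ₂
          refine le_trans ?_ hb.le
          simp only [hb₂def]
          rw [eLpNorm_eq_lintegral_rpow_enorm_toReal (by simp : (2:ℝ≥0∞) ≠ 0) (by simp : (2:ℝ≥0∞) ≠ ∞)]
          simp only [ENNReal.toReal_ofNat]
          apply ENNReal.rpow_le_rpow _ (by norm_num : (0:ℝ) ≤ 1 / 2)
          exact lintegral_mono' Measure.restrict_le_self le_rfl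
      · have hΦy : ∀ p, Φ p y = 0 := by
          intro p
          rw [hΦdef]
          simp only [indicator_of_notMem hy, zero_mul]
        simp only [hΦy, indicator_of_notMem hy, lintegral_const, zero_mul, le_refl]
    refine hstep3.trans ?_
    rw [lintegral_indicator measurableSet_closedBall, setLIntegral_const]
    have hvol : volume (closedBall (0 : E3) (ε * R)) = ENNReal.ofReal (2 * (ε * R)) ^ 3 := by
      rw [Real.volume_pi_closedBall _ (by positivity)]
      rw [ENNReal.ofReal_pow (by positivity)]
      norm_num
    rw [hvol, hcdef]
    have heq : ENNReal.ofReal (ε⁻¹ ^ 3 * Cφ * (Lr * R)) *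
        (ENNReal.ofReal η * ENNReal.ofReal η) * ENNReal.ofReal (2 * (ε * R)) ^ 3
        = ENNReal.ofReal ((ε⁻¹ ^ 3 * Cφ * (Lr * R)) * (η * η) * (2 * (ε * R)) ^ 3) := by
      rw [← ENNReal.ofReal_mul (by positivity), ← ENNReal.ofReal_pow (by positivity),
        ← ENNReal.ofReal_mul (by positivity), ← ENNReal.ofReal_mul (by positivity)]
    rw [heq]
    apply ENNReal.ofReal_le_ofReal
    have : (ε⁻¹ ^ 3 * Cφ * (Lr * R)) * (η * η) * (2 * (ε * R)) ^ 3 = K * (η * η) := by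
      rw [hKdef]
      field_simp
    rw [this]
  -- conclude
  have hSnonneg : (0:ℝ) ≤ ∫ p in Q', |innerw p| := integral_nonneg fun p => abs_nonneg _
  have hSle : (∫ p in Q', |innerw p|) ≤ K * (η * η) := by
    by_cases hint : Integrable (fun p => |innerw p|) (volume.restrict Q')
    · calc (∫ p in Q', |innerw p|)
          = (∫⁻ p in Q', ENNReal.ofReal |innerw p|).toReal :=
            integral_eq_lintegral_of_nonneg_ae (ae_of_all _ fun p => abs_nonneg _) hint.1
      _ ≤ (ENNReal.ofReal (K * (η * η))).toReal :=
            ENNReal.toReal_mono ENNReal.ofReal_ne_top hlin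
      _ = K * (η * η) := ENNReal.toReal_ofReal (by positivity)
    · rw [integral_undef hint]
      positivity
  rw [Real.dist_eq, sub_zero]
  have hgoal : (∫ p in Q', |∫ y : E3, ε⁻¹ ^ 3 * pd k φm (ε⁻¹ • y) *
      ((w₁ (p.1, p.2 - y) - w₁ p) * (w₂ (p.1, p.2 - y) - w₂ p)
        * (w₃ (p.1, p.2 - y) - w₃ p) / ε)|) = ∫ p in Q', |innerw p| := rfl
  rw [hgoal, abs_of_nonneg hSnonneg]
  exact lt_of_le_of_lt hSle hKη
end
end
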